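/- arXiv:1404.6820 — 17 statements merged into one kernel-verified Lean document; each statement's English description precedes it below -/
import Mathlib

section
/- For every bounded linear operator B : 𝓚 → 𝓗, every λ ∈ ρ(A_B), every F ∈ D(T) and every v ∈ D(T'), setting f = Γ₁F − BΓ₂F, one has ⟨F − (A_B−λ)⁻¹(T−λ)F, T'v − λ̄v⟩_H = ⟨M_B(λ)f, Γ̃₁v − B*Γ̃₂v⟩_𝓚 − ⟨f, Γ̃₂v⟩_𝓗, where B* : 𝓗 → 𝓚 is the Hilbert-space adjoint of B. -/
open scoped InnerProductSpace

noncomputable section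

/-- `R` is the (bounded, everywhere-defined) resolvent of the restriction `A_B` of `T`
to `{u ∈ dT : Γ1 u = B (Γ2 u)}` at the spectral parameter `lam`. -/
structure IsResolventAt {H E F : Type*}
    [NormedAddCommGroup H] [InnerProductSpace ℂ H]
    [NormedAddCommGroup E] [InnerProductSpace ℂ E]
    [NormedAddCommGroup F] [InnerProductSpace ℂ F]
    (dT : Submodule ℂ H) (T : ↥dT →ₗ[ℂ] H)
    (Γ1 : ↥dT →ₗ[ℂ] E) (Γ2 : ↥dT →ₗ[ℂ] F)
    (B : F →L[ℂ] E) (lam : ℂ) (R : H →L[ℂ] H) : Prop where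
  mem : ∀ y : H, R y ∈ dT
  bc : ∀ y : H, Γ1 ⟨R y, mem y⟩ = B (Γ2 ⟨R y, mem y⟩)
  right_inv : ∀ y : H, T ⟨R y, mem y⟩ - lam • R y = y
  left_inv : ∀ u : ↥dT, Γ1 u = B (Γ2 u) → R (T u - lam • (u : H)) = (u : H)

/-- `S` is the solution operator `S_{lam,B}`: it maps `f` to the unique element of
`ker (T - lam)` with `(Γ1 - B Γ2) (S f) = f`. -/
structure IsSolOp {H E F : Type*}
    [NormedAddCommGroup H] [InnerProductSpace ℂ H]
    [NormedAddCommGroup E] [InnerProductSpace ℂ E]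
    [NormedAddCommGroup F] [InnerProductSpace ℂ F]
    (dT : Submodule ℂ H) (T : ↥dT →ₗ[ℂ] H)
    (Γ1 : ↥dT →ₗ[ℂ] E) (Γ2 : ↥dT →ₗ[ℂ] F)
    (B : F →L[ℂ] E) (lam : ℂ) (S : E →ₗ[ℂ] ↥dT) : Prop where
  in_ker : ∀ f : E, T (S f) = lam • ((S f : H))
  trace : ∀ f : E, Γ1 (S f) - B (Γ2 (S f)) = f
  inv : ∀ u : ↥dT, T u = lam • (u : H) → S (Γ1 u - B (Γ2 u)) = u

/-- The fundamental identity (Lemma 2.2): for `λ ∈ ρ(A_B)`, `F ∈ D(T)`,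
`v ∈ D(T')` and `f = Γ₁F − BΓ₂F`,
`⟨F − (A_B−λ)⁻¹(T−λ)F, T'v − λ̄v⟩_H = ⟨M_B(λ)f, Γ̃₁v − B*Γ̃₂v⟩_𝓚 − ⟨f, Γ̃₂v⟩_𝓗`.
(The paper's inner products are linear in the first argument, so they appear here with the
arguments swapped relative to Mathlib's convention.) -/
theorem statement_0
    {H 𝓗 𝓚 : Type*}
    [NormedAddCommGroup H] [InnerProductSpace ℂ H] [CompleteSpace H]
    [NormedAddCommGroup 𝓗] [InnerProductSpace ℂ 𝓗] [CompleteSpace 𝓗]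
    [NormedAddCommGroup 𝓚] [InnerProductSpace ℂ 𝓚] [CompleteSpace 𝓚]
    (dT dT' : Submodule ℂ H)
    (T : ↥dT →ₗ[ℂ] H) (T' : ↥dT' →ₗ[ℂ] H)
    (Γ1 : ↥dT →ₗ[ℂ] 𝓗) (Γ2 : ↥dT →ₗ[ℂ] 𝓚)
    (Γt1 : ↥dT' →ₗ[ℂ] 𝓚) (Γt2 : ↥dT' →ₗ[ℂ] 𝓗)
    (green : ∀ (u : ↥dT) (v : ↥dT'),
      ⟪(v : H), T u⟫_ℂ - ⟪T' v, (u : H)⟫_ℂ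
        = ⟪Γt2 v, Γ1 u⟫_ℂ - ⟪Γt1 v, Γ2 u⟫_ℂ)
    (B : 𝓚 →L[ℂ] 𝓗) (lam : ℂ)
    (R : H →L[ℂ] H) (hR : IsResolventAt dT T Γ1 Γ2 B lam R)
    (S : 𝓗 →ₗ[ℂ] ↥dT) (hS : IsSolOp dT T Γ1 Γ2 B lam S)
    (F : ↥dT) (v : ↥dT') :
    ⟪T' v - (starRingEnd ℂ lam) • (v : H), (F : H) - R (T F - lam • (F : H))⟫_ℂ
      = ⟪Γt1 v - (ContinuousLinearMap.adjoint B) (Γt2 v),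
          Γ2 (S (Γ1 F - B (Γ2 F)))⟫_ℂ
        - ⟪Γt2 v, Γ1 F - B (Γ2 F)⟫_ℂ := by
  set y : H := T F - lam • (F : H) with hy
  set w : ↥dT := ⟨R y, hR.mem y⟩ with hw
  set u : ↥dT := F - w with hu
  have hwc : (w : H) = R y := rfl
  have hTw : T w = y + lam • (w : H) := by
    have h := hR.right_inv y
    rw [← hw, ← hwc] at h
    exact eq_add_of_sub_eq h
  have huc : (u : H) = (F : H) - R y := by
    simp [hu, hwc]
  have hTu : T u = lam • (u : H) := by
    rw [hu, map_sub, hTw, huc, hy]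
    module
  have hbc : Γ1 w = B (Γ2 w) := hR.bc y
  have hfeq : Γ1 u - B (Γ2 u) = Γ1 F - B (Γ2 F) := by
    simp [hu, map_sub, hbc]
  have hSu : S (Γ1 F - B (Γ2 F)) = u := by
    rw [← hfeq]; exact hS.inv u hTu
  have g := green u v
  rw [hTu] at g
  rw [hSu, ← hfeq, ← huc]
  simp only [inner_sub_left, inner_sub_right, inner_smul_left, inner_smul_right,
    ContinuousLinearMap.adjoint_inner_left, RingHom.id_apply, starRingEnd_apply,
    star_star] at g ⊢
  linear_combination -g
end
end

section
/- For every bounded linear operator B : 𝓚 → 𝓗, all λ, λ₀ ∈ ρ(A_B) and every f ∈ 𝓗, one has S_{λ,B}f = S_{λ₀,B}f + (λ − λ₀)(A_B − λ)⁻¹S_{λ₀,B}f. -/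
open scoped InnerProductSpace

noncomputable section

/-- For `λ, λ₀ ∈ ρ(A_B)` and every `f ∈ 𝓗`,
`S_{λ,B} f = S_{λ₀,B} f + (λ − λ₀)(A_B − λ)⁻¹ S_{λ₀,B} f`. -/
theorem statement_1
    {H 𝓗 𝓚 : Type*}
    [NormedAddCommGroup H] [InnerProductSpace ℂ H] [CompleteSpace H]
    [NormedAddCommGroup 𝓗] [InnerProductSpace ℂ 𝓗] [CompleteSpace 𝓗]
    [NormedAddCommGroup 𝓚] [InnerProductSpace ℂ 𝓚] [CompleteSpace 𝓚]
    (dT : Submodule ℂ H) (T : ↥dT →ₗ[ℂ] H)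
    (Γ1 : ↥dT →ₗ[ℂ] 𝓗) (Γ2 : ↥dT →ₗ[ℂ] 𝓚)
    (B : 𝓚 →L[ℂ] 𝓗) (lam lam0 : ℂ)
    (R : H →L[ℂ] H) (hR : IsResolventAt dT T Γ1 Γ2 B lam R)
    (R0 : H →L[ℂ] H) (hR0 : IsResolventAt dT T Γ1 Γ2 B lam0 R0)
    (S : 𝓗 →ₗ[ℂ] ↥dT) (hS : IsSolOp dT T Γ1 Γ2 B lam S)
    (S0 : 𝓗 →ₗ[ℂ] ↥dT) (hS0 : IsSolOp dT T Γ1 Γ2 B lam0 S0)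
    (f : 𝓗) :
    ((S f : H)) = ((S0 f : H)) + (lam - lam0) • R ((S0 f : H)) := by
  set u : ↥dT := S0 f with hu
  have hmem := hR.mem (u : H)
  set r : ↥dT := ⟨R (u : H), hmem⟩ with hr
  set v : ↥dT := u + (lam - lam0) • r with hv
  have hTr : T r = (u : H) + lam • R (u : H) := by
    have h := hR.right_inv (u : H)
    rw [sub_eq_iff_eq_add] at h
    rw [h]
  have hTv : T v = lam • (v : H) := by
    have h0 : T u = lam0 • (u : H) := hS0.in_ker f
    simp only [hv, map_add, map_smul, hTr, h0]
    push_cast [hr]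
    ring_nf
    module
  have htr : Γ1 v - B (Γ2 v) = f := by
    have h1 : Γ1 r = B (Γ2 r) := hR.bc (u : H)
    have h2 : Γ1 u - B (Γ2 u) = f := hS0.trace f
    simp only [hv, map_add, map_smul, h1]
    rw [← h2]
    abel
  have := hS.inv v hTv
  rw [htr] at this
  have : (S f : H) = (v : H) := congrArg _ this
  rw [this, hv]
  push_cast [hr]
  ring_nf
end
end

section
/- For every bounded linear operator B : 𝓚 → 𝓗, the set ρ(A_B) is open in ℂ, and for every f ∈ 𝓗 and every μ ∈ ρ(A_B), the map λ ↦ S_{λ,B}f (defined on ρ(A_B), with values in H) has complex derivative at μ equal to (A_B − μ)⁻¹S_{μ,B}f. -/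
open scoped InnerProductSpace

noncomputable section

/-!
Near a point `μ` of the resolvent set, the resolvent at `ν` is given by the Neumann series
`R ν = R μ (1 - (ν - μ) R μ)⁻¹`; hence the resolvent set is open and `ν ↦ R ν` is continuous.
The difference `S ν f - S μ f` satisfies the boundary condition and
`(T - ν) (S ν f - S μ f) = (ν - μ) S μ f`, so it equals `(ν - μ) R ν (S μ f)`. The difference
quotient of `ν ↦ S ν f` at `μ` is therefore `R ν (S μ f)`, which tends to `R μ (S μ f)`.
-/

open Filter Topology

theorem hasDerivAt_of_eventually_eq_add_smul {𝕜 F : Type*} [NontriviallyNormedField 𝕜]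
    [NormedAddCommGroup F] [NormedSpace 𝕜 F] {f g : 𝕜 → F} {a : 𝕜}
    (hg : ContinuousAt g a) (hf : ∀ᶠ x in 𝓝 a, f x = f a + (x - a) • g x) :
    HasDerivAt f (g a) a := by
  rw [hasDerivAt_iff_tendsto_slope]
  refine (hg.mono_left nhdsWithin_le_nhds).congr' ?_
  filter_upwards [self_mem_nhdsWithin, nhdsWithin_le_nhds hf] with x hxa hfx
  rw [slope_def_module, hfx, add_sub_cancel_left, smul_smul,
    inv_mul_cancel₀ (sub_ne_zero.mpr hxa), one_smul]

section Resolvent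

variable {H E F : Type*}
    [NormedAddCommGroup H] [InnerProductSpace ℂ H]
    [NormedAddCommGroup E] [InnerProductSpace ℂ E]
    [NormedAddCommGroup F] [InnerProductSpace ℂ F]
    {dT : Submodule ℂ H} {T : ↥dT →ₗ[ℂ] H}
    {Γ1 : ↥dT →ₗ[ℂ] E} {Γ2 : ↥dT →ₗ[ℂ] F} {B : F →L[ℂ] E}

namespace IsResolventAt

theorem unique {lam : ℂ} {R1 R2 : H →L[ℂ] H}
    (h1 : IsResolventAt dT T Γ1 Γ2 B lam R1)
    (h2 : IsResolventAt dT T Γ1 Γ2 B lam R2) : R1 = R2 := by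
  ext y
  simpa [h1.right_inv y] using (h2.left_inv ⟨R1 y, h1.mem y⟩ (h1.bc y)).symm

variable [CompleteSpace H]

theorem neumann {μ ν : ℂ} {K : H →L[ℂ] H} (hK : IsResolventAt dT T Γ1 Γ2 B μ K)
    (h : ‖(ν - μ) • K‖ < 1) :
    IsResolventAt dT T Γ1 Γ2 B ν (K * Ring.inverse (1 - (ν - μ) • K)) := by
  have hu : IsUnit (1 - (ν - μ) • K) := (Units.oneSub ((ν - μ) • K) h).isUnit
  set W := Ring.inverse (1 - (ν - μ) • K)
  have hWright : ∀ y, W y - (ν - μ) • K (W y) = y := fun y => by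
    simpa only [mul_apply_eq_comp, sub_apply, one_apply_eq_self, smul_apply] using
      congr($(Ring.mul_inverse_cancel _ hu) y)
  have hWleft : ∀ y, W (y - (ν - μ) • K y) = y := fun y => by
    simpa only [mul_apply_eq_comp, sub_apply, one_apply_eq_self, smul_apply] using
      congr($(Ring.inverse_mul_cancel _ hu) y)
  refine ⟨fun y => hK.mem (W y), fun y => hK.bc (W y), fun y => ?_, fun u hu' => ?_⟩
  · change T ⟨K (W y), hK.mem (W y)⟩ - ν • K (W y) = y
    calc T ⟨K (W y), hK.mem (W y)⟩ - ν • K (W y)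
        = (T ⟨K (W y), hK.mem (W y)⟩ - μ • K (W y)) - (ν - μ) • K (W y) := by module
      _ = y := by rw [hK.right_inv, hWright]
  · have hKu := hK.left_inv u hu'
    have hshift : T u - ν • (u : H) =
        (T u - μ • (u : H)) - (ν - μ) • K (T u - μ • (u : H)) := by
      rw [hKu]; module
    change K (W (T u - ν • (u : H))) = u
    rw [hshift, hWleft, hKu]

theorem of_mem_ball {μ ν : ℂ} {K : H →L[ℂ] H} (hK : IsResolventAt dT T Γ1 Γ2 B μ K)
    (hν : ν ∈ Metric.ball μ (‖K‖ + 1)⁻¹) :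
    IsResolventAt dT T Γ1 Γ2 B ν (K * Ring.inverse (1 - (ν - μ) • K)) := by
  have hpos : (0 : ℝ) < ‖K‖ + 1 := by positivity
  rw [Metric.mem_ball, dist_eq_norm] at hν
  refine hK.neumann ?_
  calc ‖(ν - μ) • K‖ = ‖ν - μ‖ * ‖K‖ := norm_smul _ _
    _ ≤ ‖ν - μ‖ * (‖K‖ + 1) := by gcongr; linarith
    _ < (‖K‖ + 1)⁻¹ * (‖K‖ + 1) := by gcongr
    _ = 1 := inv_mul_cancel₀ hpos.ne'

theorem continuousAt {R : ℂ → H →L[ℂ] H} {μ : ℂ}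
    (hR : ∀ᶠ ν in 𝓝 μ, IsResolventAt dT T Γ1 Γ2 B ν (R ν)) : ContinuousAt R μ := by
  have hμ := hR.self_of_nhds
  have hball : Metric.ball μ (‖R μ‖ + 1)⁻¹ ∈ 𝓝 μ := Metric.ball_mem_nhds μ (by positivity)
  have hseries : ∀ᶠ ν in 𝓝 μ, R μ * Ring.inverse (1 - (ν - μ) • R μ) = R ν := by
    filter_upwards [hR, hball] with ν hν hνball
    exact (hμ.of_mem_ball hνball).unique hν
  refine ContinuousAt.congr ?_ hseries
  have hinv : ContinuousAt Ring.inverse (1 : H →L[ℂ] H) := by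
    simpa using NormedRing.inverse_continuousAt (1 : (H →L[ℂ] H)ˣ)
  have hline : ContinuousAt (fun ν : ℂ => 1 - (ν - μ) • R μ) μ := by fun_prop
  exact continuousAt_const.mul (hinv.comp_of_eq hline (by simp))

end IsResolventAt

theorem isOpen_setOf_isResolventAt [CompleteSpace H] :
    IsOpen {lam : ℂ | ∃ R : H →L[ℂ] H, IsResolventAt dT T Γ1 Γ2 B lam R} := by
  refine Metric.isOpen_iff.mpr fun μ ⟨K, hK⟩ => ⟨(‖K‖ + 1)⁻¹, by positivity, fun ν hν => ?_⟩
  exact ⟨_, hK.of_mem_ball hν⟩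

theorem IsSolOp.coe_apply_eq_add_smul {μ ν : ℂ} {Sμ Sν : E →ₗ[ℂ] ↥dT} {Rν : H →L[ℂ] H}
    (hSμ : IsSolOp dT T Γ1 Γ2 B μ Sμ) (hSν : IsSolOp dT T Γ1 Γ2 B ν Sν)
    (hRν : IsResolventAt dT T Γ1 Γ2 B ν Rν) (f : E) :
    (Sν f : H) = Sμ f + (ν - μ) • Rν (Sμ f) := by
  have hbc : Γ1 (Sν f - Sμ f) = B (Γ2 (Sν f - Sμ f)) := by
    rw [← sub_eq_zero]
    calc Γ1 (Sν f - Sμ f) - B (Γ2 (Sν f - Sμ f))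
        = (Γ1 (Sν f) - B (Γ2 (Sν f))) - (Γ1 (Sμ f) - B (Γ2 (Sμ f))) := by
          simp only [map_sub]; abel
      _ = 0 := by rw [hSν.trace, hSμ.trace, sub_self]
  have hker : T (Sν f - Sμ f) - ν • ((Sν f - Sμ f : ↥dT) : H) = (ν - μ) • (Sμ f : H) := by
    simp only [map_sub, hSν.in_ker, hSμ.in_ker, Submodule.coe_sub]
    module
  have hdiff := hRν.left_inv _ hbc
  rw [hker, map_smul, Submodule.coe_sub] at hdiff
  rw [hdiff]
  abel

end Resolvent

theorem statement_2_general
    {H 𝓗 𝓚 : Type*}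
    [NormedAddCommGroup H] [InnerProductSpace ℂ H] [CompleteSpace H]
    [NormedAddCommGroup 𝓗] [InnerProductSpace ℂ 𝓗]
    [NormedAddCommGroup 𝓚] [InnerProductSpace ℂ 𝓚]
    (dT : Submodule ℂ H) (T : ↥dT →ₗ[ℂ] H)
    (Γ1 : ↥dT →ₗ[ℂ] 𝓗) (Γ2 : ↥dT →ₗ[ℂ] 𝓚)
    (B : 𝓚 →L[ℂ] 𝓗)
    (res : Set ℂ)
    (hres : res = {lam : ℂ | ∃ R : H →L[ℂ] H, IsResolventAt dT T Γ1 Γ2 B lam R})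
    (R : ℂ → H →L[ℂ] H)
    (hR : ∀ lam ∈ res, IsResolventAt dT T Γ1 Γ2 B lam (R lam))
    (S : ℂ → 𝓗 →ₗ[ℂ] ↥dT)
    (hS : ∀ lam ∈ res, IsSolOp dT T Γ1 Γ2 B lam (S lam)) :
    IsOpen res ∧
      ∀ (f : 𝓗) (μ : ℂ), μ ∈ res →
        HasDerivAt (fun lam : ℂ => ((S lam f : H))) (R μ ((S μ f : H))) μ := by
  have hopen : IsOpen res := hres ▸ isOpen_setOf_isResolventAt
  refine ⟨hopen, fun f μ hμ => ?_⟩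
  have hnear : res ∈ 𝓝 μ := hopen.mem_nhds hμ
  have hRcont : ContinuousAt R μ := IsResolventAt.continuousAt (eventually_of_mem hnear hR)
  refine hasDerivAt_of_eventually_eq_add_smul (hRcont.clm_apply continuousAt_const) ?_
  filter_upwards [hnear] with ν hν
  exact (hS μ hμ).coe_apply_eq_add_smul (hS ν hν) (hR ν hν) f

/-- `ρ(A_B)` is open, and `λ ↦ S_{λ,B} f` has complex derivative
`(A_B − μ)⁻¹ S_{μ,B} f` at every `μ ∈ ρ(A_B)`. -/
theorem statement_2
    {H 𝓗 𝓚 : Type*}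
    [NormedAddCommGroup H] [InnerProductSpace ℂ H] [CompleteSpace H]
    [NormedAddCommGroup 𝓗] [InnerProductSpace ℂ 𝓗] [CompleteSpace 𝓗]
    [NormedAddCommGroup 𝓚] [InnerProductSpace ℂ 𝓚] [CompleteSpace 𝓚]
    (dT : Submodule ℂ H) (T : ↥dT →ₗ[ℂ] H)
    (Γ1 : ↥dT →ₗ[ℂ] 𝓗) (Γ2 : ↥dT →ₗ[ℂ] 𝓚)
    (B : 𝓚 →L[ℂ] 𝓗)
    (res : Set ℂ)
    (hres : res = {lam : ℂ | ∃ R : H →L[ℂ] H, IsResolventAt dT T Γ1 Γ2 B lam R})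
    (R : ℂ → H →L[ℂ] H)
    (hR : ∀ lam ∈ res, IsResolventAt dT T Γ1 Γ2 B lam (R lam))
    (S : ℂ → 𝓗 →ₗ[ℂ] ↥dT)
    (hS : ∀ lam ∈ res, IsSolOp dT T Γ1 Γ2 B lam (S lam)) :
    IsOpen res ∧
      ∀ (f : 𝓗) (μ : ℂ), μ ∈ res →
        HasDerivAt (fun lam : ℂ => ((S lam f : H))) (R μ ((S μ f : H))) μ :=
  statement_2_general dT T Γ1 Γ2 B res hres R hR S hS
end
end

section
/- Let B, C : 𝓚 → 𝓗 be bounded linear operators with ρ(A_B) and ρ(A_C) nonempty. If ρ(A_B) ∪ ρ(A_C) is contained in the closure of ρ(A_B) ∩ ρ(A_C), then the closed linear span in H of ⋃_{μ ∈ ρ(A_B)} Ran(S_{μ,B}) equals the closed linear span of ⋃_{μ ∈ ρ(A_C)} Ran(S_{μ,C}); equivalently (since Ran(S_{μ,B}) = ker(T−μ) for μ ∈ ρ(A_B)), the closed spans of the kernels ker(T−μ) taken over μ ∈ ρ(A_B) and over μ ∈ ρ(A_C) coincide. -/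
open scoped InnerProductSpace

noncomputable section

lemma key_lemma {H E F : Type*}
    [NormedAddCommGroup H] [InnerProductSpace ℂ H]
    [NormedAddCommGroup E] [InnerProductSpace ℂ E]
    [NormedAddCommGroup F] [InnerProductSpace ℂ F]
    (dT : Submodule ℂ H) (T : ↥dT →ₗ[ℂ] H)
    (Γ1 : ↥dT →ₗ[ℂ] E) (Γ2 : ↥dT →ₗ[ℂ] F)
    (B1 : F →L[ℂ] E) (res1 res2 : Set ℂ)
    (h1 : ∀ lam ∈ res1, ∃ R : H →L[ℂ] H, IsResolventAt dT T Γ1 Γ2 B1 lam R)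
    (M : Submodule ℂ H)
    (hM : ∀ μ ∈ res1 ∩ res2, ∀ v : ↥dT, T v = μ • (v : H) → (v : H) ∈ M)
    (lam : ℂ) (hlam : lam ∈ res1) (hcl : lam ∈ closure (res1 ∩ res2))
    (u : ↥dT) (hu : T u = lam • (u : H)) : (u : H) ∈ closure (M : Set H) := by
  rw [Metric.mem_closure_iff]
  intro ε hε
  obtain ⟨Rl, hRl⟩ := h1 lam hlam
  set K : ℝ := ‖Rl‖ with hKdef
  have hK : 0 ≤ K := norm_nonneg _
  have hden : 0 < 2 * (K + 1) * (‖(u : H)‖ + 1) := by positivity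
  set δ : ℝ := min (1 / (2 * (K + 1))) (ε / (2 * (K + 1) * (‖(u : H)‖ + 1))) with hδdef
  have hδpos : 0 < δ := lt_min (by positivity) (by positivity)
  obtain ⟨μ, hμ, hdist⟩ := Metric.mem_closure_iff.mp hcl δ hδpos
  obtain ⟨Rm, hRm⟩ := h1 μ hμ.1
  set w : H := Rm (u : H) with hwdef
  set wh : ↥dT := ⟨w, hRm.mem (u : H)⟩ with hwh
  have hTwh : T wh = (u : H) + μ • w := by
    have h := hRm.right_inv (u : H)
    rw [sub_eq_iff_eq_add] at h
    rw [show T wh = T ⟨Rm (u:H), hRm.mem (u:H)⟩ from rfl, h]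
    try module
  -- the approximant
  set vh : ↥dT := u + (μ - lam) • wh with hvh
  have hvcoe : ((vh : H)) = (u : H) + (μ - lam) • w := rfl
  have hvker : T vh = μ • ((vh : H)) := by
    rw [hvh, map_add, map_smul, hu, hTwh, hvcoe]
    module
  have hmem : ((vh : H)) ∈ M := hM μ hμ vh hvker
  -- the bound
  have hbc : Γ1 wh = B1 (Γ2 wh) := hRm.bc (u : H)
  have hle := hRl.left_inv wh hbc
  have heq : T wh - lam • ((wh : H)) = (u : H) + (μ - lam) • w := by
    rw [show ((wh : H)) = w from rfl, hTwh]
    module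
  have hw_eq : w = Rl ((u : H) + (μ - lam) • w) := by
    rw [← heq, hle]
  have hwle : ‖w‖ ≤ K * (‖(u : H)‖ + ‖μ - lam‖ * ‖w‖) := by
    calc ‖w‖ = ‖Rl ((u : H) + (μ - lam) • w)‖ := by rw [← hw_eq]
    _ ≤ K * ‖(u : H) + (μ - lam) • w‖ := Rl.le_opNorm _
    _ ≤ K * (‖(u : H)‖ + ‖μ - lam‖ * ‖w‖) := by
        gcongr
        calc ‖(u : H) + (μ - lam) • w‖ ≤ ‖(u : H)‖ + ‖(μ - lam) • w‖ := norm_add_le _ _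
        _ = ‖(u : H)‖ + ‖μ - lam‖ * ‖w‖ := by rw [norm_smul]
  set d : ℝ := ‖μ - lam‖ with hd
  have hd0 : 0 ≤ d := norm_nonneg _
  have hdlt : d < δ := by
    have h' : d = dist lam μ := by rw [hd, dist_eq_norm, norm_sub_rev]
    rw [h']; exact hdist
  have hδ1 : δ ≤ 1 / (2 * (K + 1)) := min_le_left _ _
  have hδ2 : δ ≤ ε / (2 * (K + 1) * (‖(u : H)‖ + 1)) := min_le_right _ _
  have hKd : K * d ≤ 1 / 2 := by
    have h1' : d ≤ 1 / (2 * (K + 1)) := le_of_lt (lt_of_lt_of_le hdlt hδ1)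
    have : K * d ≤ K * (1 / (2 * (K + 1))) := by gcongr
    have h2' : K * (1 / (2 * (K + 1))) ≤ 1 / 2 := by
      rw [mul_one_div, div_le_div_iff₀ (by positivity) two_pos]
      nlinarith
    linarith
  have hw2K : ‖w‖ ≤ 2 * K * ‖(u : H)‖ := by
    have hexp : K * (‖(u : H)‖ + d * ‖w‖) = K * ‖(u : H)‖ + K * d * ‖w‖ := by ring
    have hhalf : K * d * ‖w‖ ≤ (1 / 2) * ‖w‖ := mul_le_mul_of_nonneg_right hKd (norm_nonneg w)
    linarith
  refine ⟨(vh : H), hmem, ?_⟩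
  have hdistuv : dist (u : H) ((vh : H)) = d * ‖w‖ := by
    rw [dist_eq_norm, hvcoe]
    rw [show (u : H) - ((u : H) + (μ - lam) • w) = -((μ - lam) • w) by abel]
    rw [norm_neg, norm_smul]
  rw [hdistuv]
  have hdden : d * (2 * (K + 1) * (‖(u : H)‖ + 1)) < ε := by
    have : d < ε / (2 * (K + 1) * (‖(u : H)‖ + 1)) := lt_of_lt_of_le hdlt hδ2
    rw [lt_div_iff₀ hden] at this
    linarith
  calc d * ‖w‖ ≤ d * (2 * (K + 1) * (‖(u : H)‖ + 1)) := by
        apply mul_le_mul_of_nonneg_left _ hd0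
        have hexp : 2 * (K + 1) * (‖(u : H)‖ + 1) = 2 * K * ‖(u : H)‖ + 2 * K + 2 * ‖(u : H)‖ + 2 := by ring
        linarith [norm_nonneg (u : H)]
    _ < ε := hdden

/-- If `ρ(A_B) ∪ ρ(A_C) ⊆ closure (ρ(A_B) ∩ ρ(A_C))` (both nonempty), then
the closed linear spans of `⋃_{μ ∈ ρ(A_B)} Ran S_{μ,B}` and `⋃_{μ ∈ ρ(A_C)} Ran S_{μ,C}`
coincide. -/
theorem statement_3
    {H 𝓗 𝓚 : Type*}
    [NormedAddCommGroup H] [InnerProductSpace ℂ H] [CompleteSpace H]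
    [NormedAddCommGroup 𝓗] [InnerProductSpace ℂ 𝓗] [CompleteSpace 𝓗]
    [NormedAddCommGroup 𝓚] [InnerProductSpace ℂ 𝓚] [CompleteSpace 𝓚]
    (dT : Submodule ℂ H) (T : ↥dT →ₗ[ℂ] H)
    (Γ1 : ↥dT →ₗ[ℂ] 𝓗) (Γ2 : ↥dT →ₗ[ℂ] 𝓚)
    (B C : 𝓚 →L[ℂ] 𝓗)
    (resB resC : Set ℂ)
    (hresB : resB = {lam : ℂ | ∃ R : H →L[ℂ] H, IsResolventAt dT T Γ1 Γ2 B lam R})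
    (hresC : resC = {lam : ℂ | ∃ R : H →L[ℂ] H, IsResolventAt dT T Γ1 Γ2 C lam R})
    (hneB : resB.Nonempty) (hneC : resC.Nonempty)
    (hsub : resB ∪ resC ⊆ closure (resB ∩ resC))
    (SB : ℂ → 𝓗 →ₗ[ℂ] ↥dT)
    (hSB : ∀ lam ∈ resB, IsSolOp dT T Γ1 Γ2 B lam (SB lam))
    (SC : ℂ → 𝓗 →ₗ[ℂ] ↥dT)
    (hSC : ∀ lam ∈ resC, IsSolOp dT T Γ1 Γ2 C lam (SC lam)) :
    closure ((Submodule.span ℂ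
        (⋃ lam ∈ resB, Set.range (fun f : 𝓗 => ((SB lam f : H)))) : Submodule ℂ H) : Set H)
      = closure ((Submodule.span ℂ
        (⋃ lam ∈ resC, Set.range (fun f : 𝓗 => ((SC lam f : H)))) : Submodule ℂ H) : Set H) := by
  set MB : Submodule ℂ H :=
    Submodule.span ℂ (⋃ lam ∈ resB, Set.range (fun f : 𝓗 => ((SB lam f : H)))) with hMB
  set MC : Submodule ℂ H :=
    Submodule.span ℂ (⋃ lam ∈ resC, Set.range (fun f : 𝓗 => ((SC lam f : H)))) with hMC
  have h1B : ∀ lam ∈ resB, ∃ R : H →L[ℂ] H, IsResolventAt dT T Γ1 Γ2 B lam R := by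
    intro lam h; rw [hresB] at h; exact h
  have h1C : ∀ lam ∈ resC, ∃ R : H →L[ℂ] H, IsResolventAt dT T Γ1 Γ2 C lam R := by
    intro lam h; rw [hresC] at h; exact h
  have hkerC : ∀ μ ∈ resB ∩ resC, ∀ v : ↥dT, T v = μ • (v : H) → (v : H) ∈ MC := by
    intro μ hμ v hv
    have h := (hSC μ hμ.2).inv v hv
    apply Submodule.subset_span
    exact Set.mem_biUnion hμ.2 ⟨Γ1 v - C (Γ2 v), congrArg Subtype.val h⟩
  have hkerB : ∀ μ ∈ resB ∩ resC, ∀ v : ↥dT, T v = μ • (v : H) → (v : H) ∈ MB := by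
    intro μ hμ v hv
    have h := (hSB μ hμ.1).inv v hv
    apply Submodule.subset_span
    exact Set.mem_biUnion hμ.1 ⟨Γ1 v - B (Γ2 v), congrArg Subtype.val h⟩
  have hBsub : ∀ lam ∈ resB, ∀ u : ↥dT, T u = lam • (u : H) →
      (u : H) ∈ closure (MC : Set H) := fun lam hlam u hu =>
    key_lemma dT T Γ1 Γ2 B resB resC h1B MC hkerC lam hlam
      (hsub (Set.mem_union_left _ hlam)) u hu
  have hCsub : ∀ lam ∈ resC, ∀ u : ↥dT, T u = lam • (u : H) →
      (u : H) ∈ closure (MB : Set H) := fun lam hlam u hu =>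
    key_lemma dT T Γ1 Γ2 C resC resB h1C MB
      (fun μ hμ => hkerB μ ⟨hμ.2, hμ.1⟩) lam hlam
      (by rw [Set.inter_comm]; exact hsub (Set.mem_union_right _ hlam)) u hu
  have hgenB : (⋃ lam ∈ resB, Set.range (fun f : 𝓗 => ((SB lam f : H))))
      ⊆ closure (MC : Set H) := by
    intro x hx
    simp only [Set.mem_iUnion, Set.mem_range] at hx
    obtain ⟨lam, hlam, f, rfl⟩ := hx
    exact hBsub lam hlam (SB lam f) ((hSB lam hlam).in_ker f)
  have hgenC : (⋃ lam ∈ resC, Set.range (fun f : 𝓗 => ((SC lam f : H))))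
      ⊆ closure (MB : Set H) := by
    intro x hx
    simp only [Set.mem_iUnion, Set.mem_range] at hx
    obtain ⟨lam, hlam, f, rfl⟩ := hx
    exact hCsub lam hlam (SC lam f) ((hSC lam hlam).in_ker f)
  have hle1 : MB ≤ MC.topologicalClosure := by
    rw [hMB]
    apply Submodule.span_le.mpr
    rw [Submodule.topologicalClosure_coe]
    exact hgenB
  have hle2 : MC ≤ MB.topologicalClosure := by
    rw [hMC]
    apply Submodule.span_le.mpr
    rw [Submodule.topologicalClosure_coe]
    exact hgenC
  have hs1 : (MB : Set H) ⊆ closure (MC : Set H) := by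
    rw [← Submodule.topologicalClosure_coe]
    exact fun x hx => hle1 hx
  have hs2 : (MC : Set H) ⊆ closure (MB : Set H) := by
    rw [← Submodule.topologicalClosure_coe]
    exact fun x hx => hle2 hx
  exact Set.Subset.antisymm (closure_minimal hs1 isClosed_closure)
    (closure_minimal hs2 isClosed_closure)
end
end

section
/- Suppose that for all bounded linear operators B, C : 𝓚 → 𝓗 one has ρ(A_B) ∪ ρ(A_C) ⊆ closure(ρ(A_B) ∩ ρ(A_C)), and let Λ = ⋃_C ρ(A_C), the union taken over all bounded C : 𝓚 → 𝓗. Then for every bounded B with ρ(A_B) nonempty, the closed linear span in H of ⋃_{μ ∈ ρ(A_B)} Ran(S_{μ,B}) equals the closed linear span of ⋃_{λ ∈ Λ} ker(T − λ). -/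
open scoped InnerProductSpace

noncomputable section

/-- Under the density hypothesis on resolvent sets, the closed span of
`⋃_{μ ∈ ρ(A_B)} Ran S_{μ,B}` equals the closed span of `⋃_{λ ∈ Λ} ker (T − λ)`,
where `Λ = ⋃_C ρ(A_C)`. -/
theorem statement_4
    {H 𝓗 𝓚 : Type*}
    [NormedAddCommGroup H] [InnerProductSpace ℂ H] [CompleteSpace H]
    [NormedAddCommGroup 𝓗] [InnerProductSpace ℂ 𝓗] [CompleteSpace 𝓗]
    [NormedAddCommGroup 𝓚] [InnerProductSpace ℂ 𝓚] [CompleteSpace 𝓚]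
    (dT : Submodule ℂ H) (T : ↥dT →ₗ[ℂ] H)
    (Γ1 : ↥dT →ₗ[ℂ] 𝓗) (Γ2 : ↥dT →ₗ[ℂ] 𝓚)
    (resOf : (𝓚 →L[ℂ] 𝓗) → Set ℂ)
    (hresOf : ∀ B : 𝓚 →L[ℂ] 𝓗,
      resOf B = {lam : ℂ | ∃ R : H →L[ℂ] H, IsResolventAt dT T Γ1 Γ2 B lam R})
    (hsub : ∀ B C : 𝓚 →L[ℂ] 𝓗, resOf B ∪ resOf C ⊆ closure (resOf B ∩ resOf C))
    (B : 𝓚 →L[ℂ] 𝓗) (hne : (resOf B).Nonempty)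
    (S : ℂ → 𝓗 →ₗ[ℂ] ↥dT)
    (hS : ∀ lam ∈ resOf B, IsSolOp dT T Γ1 Γ2 B lam (S lam)) :
    closure ((Submodule.span ℂ
        (⋃ lam ∈ resOf B, Set.range (fun f : 𝓗 => ((S lam f : H)))) : Submodule ℂ H) : Set H)
      = closure ((Submodule.span ℂ
        (⋃ lam ∈ (⋃ C : 𝓚 →L[ℂ] 𝓗, resOf C),
          {u : H | ∃ hu : u ∈ dT, T ⟨u, hu⟩ = lam • u}) : Submodule ℂ H) : Set H) := by
    classical
  set gL : Set H := ⋃ lam ∈ resOf B, Set.range (fun f : 𝓗 => ((S lam f : H))) with hgL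
  set gK : Set H := ⋃ lam ∈ (⋃ C : 𝓚 →L[ℂ] 𝓗, resOf C),
      {u : H | ∃ hu : u ∈ dT, T ⟨u, hu⟩ = lam • u} with hgK
  apply subset_antisymm
  · -- easy direction: ranges of solution operators lie in kernels
    apply closure_mono
    apply Submodule.span_mono
    rintro x hx
    rw [Set.mem_iUnion₂] at hx
    obtain ⟨lam, hlam, f, rfl⟩ := hx
    rw [Set.mem_iUnion₂]
    refine ⟨lam, Set.mem_iUnion.mpr ⟨B, hlam⟩, (S lam f).2, ?_⟩
    have h := (hS lam hlam).in_ker f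
    simpa using h
  · -- hard direction
    have hKL : ∀ u ∈ gK, u ∈ closure ((Submodule.span ℂ gL : Submodule ℂ H) : Set H) := by
      intro u hu
      rw [Set.mem_iUnion₂] at hu
      obtain ⟨lam, hlamΛ, hu, hTu⟩ := hu
      rw [Set.mem_iUnion] at hlamΛ
      obtain ⟨C, hlamC⟩ := hlamΛ
      obtain ⟨R, hR⟩ : ∃ R : H →L[ℂ] H, IsResolventAt dT T Γ1 Γ2 C lam R := by
        have h := hlamC; rw [hresOf] at h; exact h
      set M := ‖R‖ with hM
      have hM0 : (0:ℝ) ≤ M := norm_nonneg R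
      rw [Metric.mem_closure_iff]
      intro ε hε
      set δ : ℝ := min (1/(2*(M+1))) (ε/(2*M*‖u‖+1)) with hδdef
      have hδ : 0 < δ := by
        apply lt_min
        · positivity
        · positivity
      have hcl : lam ∈ closure (resOf B ∩ resOf C) := hsub B C (Or.inr hlamC)
      rw [Metric.mem_closure_iff] at hcl
      obtain ⟨μ, ⟨hμB, hμC⟩, hdist⟩ := hcl δ hδ
      obtain ⟨Rμ, hRμ⟩ : ∃ R : H →L[ℂ] H, IsResolventAt dT T Γ1 Γ2 C μ R := by
        have h := hμC; rw [hresOf] at h; exact h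
      have hx : ‖μ - lam‖ < δ := by
        rw [← dist_eq_norm, dist_comm]; exact hdist
      have hx0 : (0:ℝ) ≤ ‖μ - lam‖ := norm_nonneg _
      -- resolvent identity bound
      have hr : T ⟨Rμ u, hRμ.mem u⟩ = u + μ • Rμ u := by
        have := hRμ.right_inv u
        linear_combination (norm := module) this
      have key : R (u + (μ - lam) • Rμ u) = Rμ u := by
        have h := hR.left_inv ⟨Rμ u, hRμ.mem u⟩ (hRμ.bc u)
        simp only [hr, Submodule.coe_mk] at h
        have e : u + (μ - lam) • Rμ u = u + μ • Rμ u - lam • Rμ u := by module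
        rw [e, h]
      have hbound : ‖Rμ u‖ ≤ M * (‖u‖ + ‖μ - lam‖ * ‖Rμ u‖) := by
        calc ‖Rμ u‖ = ‖R (u + (μ - lam) • Rμ u)‖ := by rw [key]
          _ ≤ M * ‖u + (μ - lam) • Rμ u‖ := R.le_opNorm _
          _ ≤ M * (‖u‖ + ‖μ - lam‖ * ‖Rμ u‖) := by
              apply mul_le_mul_of_nonneg_left _ hM0
              calc ‖u + (μ - lam) • Rμ u‖ ≤ ‖u‖ + ‖(μ - lam) • Rμ u‖ := norm_add_le _ _
                _ = ‖u‖ + ‖μ - lam‖ * ‖Rμ u‖ := by rw [norm_smul]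
      have hx1 : ‖μ - lam‖ * (2*(M+1)) < 1 := by
        have h1 : ‖μ - lam‖ < 1/(2*(M+1)) := lt_of_lt_of_le hx (min_le_left _ _)
        rw [lt_div_iff₀ (by positivity)] at h1
        exact h1
      have hRμu : ‖Rμ u‖ ≤ 2 * M * ‖u‖ := by
        nlinarith [norm_nonneg (Rμ u), norm_nonneg u,
          mul_nonneg (mul_nonneg hx0 hM0) (norm_nonneg (Rμ u))]
      -- the approximating element
      set vD : ↥dT := ⟨u, hu⟩ + (μ - lam) • ⟨Rμ u, hRμ.mem u⟩ with hvD
      have hvDc : (vD : H) = u + (μ - lam) • Rμ u := rfl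
      have hTv : T vD = μ • (vD : H) := by
        rw [hvD, map_add, map_smul, hTu, hr]
        rw [← hvD, hvDc]
        module
      have hmem : (vD : H) ∈ Submodule.span ℂ gL := by
        apply Submodule.subset_span
        rw [hgL, Set.mem_iUnion₂]
        refine ⟨μ, hμB, Γ1 vD - B (Γ2 vD), ?_⟩
        show ((S μ) (Γ1 vD - B (Γ2 vD)) : H) = ↑vD
        rw [(hS μ hμB).inv vD hTv]
      refine ⟨(vD : H), hmem, ?_⟩
      rw [dist_eq_norm, hvDc]
      have : u - (u + (μ - lam) • Rμ u) = -((μ - lam) • Rμ u) := by module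
      rw [this, norm_neg, norm_smul]
      have h2 : ‖μ - lam‖ * (2*M*‖u‖+1) < ε := by
        have h1 : ‖μ - lam‖ < ε/(2*M*‖u‖+1) := lt_of_lt_of_le hx (min_le_right _ _)
        rw [lt_div_iff₀ (by positivity)] at h1
        exact h1
      nlinarith [norm_nonneg u]
    have h1 : Submodule.span ℂ gK ≤ (Submodule.span ℂ gL).topologicalClosure := by
      rw [Submodule.span_le]
      intro u hu
      have := hKL u hu
      rwa [← Submodule.topologicalClosure_coe, SetLike.mem_coe] at this
    calc closure ((Submodule.span ℂ gK : Submodule ℂ H) : Set H)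
        ⊆ closure (((Submodule.span ℂ gL).topologicalClosure : Submodule ℂ H) : Set H) :=
          closure_mono h1
      _ = closure ((Submodule.span ℂ gL : Submodule ℂ H) : Set H) := by
          rw [Submodule.topologicalClosure_coe, closure_closure]
end
end

section
/- Let B : 𝓚 → 𝓗 be bounded, λ, μ ∈ ρ(A_B) and μ̃ ∈ ρ(Ã_{B*}). For f ∈ 𝓗 and w ∈ 𝓚 put h = S_{μ,B}f and h̃ = S̃_{μ̃,B*}w. Then ⟨M_B(λ)f, w⟩_𝓚 = ⟨h − (μ−λ)(A_B−λ)⁻¹h, (μ̃ − λ̄)h̃⟩_H + ⟨f, Γ̃₂h̃⟩_𝓗. (This is the reconstruction formula showing that M_B(λ) is determined by the resolvent of A_B paired between the solution ranges Ran(S_{μ,B}) and Ran(S̃_{μ̃,B*}) together with the data Γ̃₂ ∘ S̃_{μ̃,B*}.) -/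
open scoped InnerProductSpace

noncomputable section

/-- Reconstruction formula for the M-function:
`⟨M_B(λ)f, w⟩_𝓚 = ⟨h − (μ−λ)(A_B−λ)⁻¹h, (μ̃ − λ̄)h̃⟩_H + ⟨f, Γ̃₂h̃⟩_𝓗`
with `h = S_{μ,B}f`, `h̃ = S̃_{μ̃,B*}w`. -/
theorem statement_5
    {H 𝓗 𝓚 : Type*}
    [NormedAddCommGroup H] [InnerProductSpace ℂ H] [CompleteSpace H]
    [NormedAddCommGroup 𝓗] [InnerProductSpace ℂ 𝓗] [CompleteSpace 𝓗]
    [NormedAddCommGroup 𝓚] [InnerProductSpace ℂ 𝓚] [CompleteSpace 𝓚]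
    (dT dT' : Submodule ℂ H)
    (T : ↥dT →ₗ[ℂ] H) (T' : ↥dT' →ₗ[ℂ] H)
    (Γ1 : ↥dT →ₗ[ℂ] 𝓗) (Γ2 : ↥dT →ₗ[ℂ] 𝓚)
    (Γt1 : ↥dT' →ₗ[ℂ] 𝓚) (Γt2 : ↥dT' →ₗ[ℂ] 𝓗)
    (green : ∀ (u : ↥dT) (v : ↥dT'),
      ⟪(v : H), T u⟫_ℂ - ⟪T' v, (u : H)⟫_ℂ
        = ⟪Γt2 v, Γ1 u⟫_ℂ - ⟪Γt1 v, Γ2 u⟫_ℂ)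
    (B : 𝓚 →L[ℂ] 𝓗) (lam μ μt : ℂ)
    (R : H →L[ℂ] H) (hR : IsResolventAt dT T Γ1 Γ2 B lam R)
    (Rμ : H →L[ℂ] H) (hRμ : IsResolventAt dT T Γ1 Γ2 B μ Rμ)
    (Rt : H →L[ℂ] H)
    (hRt : IsResolventAt dT' T' Γt1 Γt2 (ContinuousLinearMap.adjoint B) μt Rt)
    (Slam : 𝓗 →ₗ[ℂ] ↥dT) (hSlam : IsSolOp dT T Γ1 Γ2 B lam Slam)
    (Sμ : 𝓗 →ₗ[ℂ] ↥dT) (hSμ : IsSolOp dT T Γ1 Γ2 B μ Sμ)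
    (St : 𝓚 →ₗ[ℂ] ↥dT')
    (hSt : IsSolOp dT' T' Γt1 Γt2 (ContinuousLinearMap.adjoint B) μt St)
    (f : 𝓗) (w : 𝓚) :
    ⟪w, Γ2 (Slam f)⟫_ℂ
      = ⟪(μt - starRingEnd ℂ lam) • ((St w : H)),
          ((Sμ f : H)) - (μ - lam) • R ((Sμ f : H))⟫_ℂ
        + ⟪Γt2 (St w), f⟫_ℂ := by

  -- abbreviations
  set h : ↥dT := Sμ f with hh
  set rh : ↥dT := ⟨R (h : H), hR.mem _⟩ with hrh
  set u : ↥dT := h - (μ - lam) • rh with hu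
  set v : ↥dT' := St w with hv
  have hucoe : (u : H) = (h : H) - (μ - lam) • R (h : H) := rfl
  have hTrh : T rh = (h : H) + lam • R (h : H) := by
    have h1 := hR.right_inv (h : H)
    rw [sub_eq_iff_eq_add] at h1
    exact h1
  have hTu : T u = lam • (u : H) := by
    rw [hu, map_sub, map_smul, hTrh, hSμ.in_ker f, hucoe]
    simp only [smul_add, smul_sub, smul_smul]
    module
  have hΓ : Γ1 u - B (Γ2 u) = f := by
    have hbc : Γ1 rh = B (Γ2 rh) := hR.bc (h : H)
    rw [hu, map_sub, map_smul, map_sub, map_smul, map_sub, map_smul, hbc]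
    have := hSμ.trace f
    rw [← hh] at this
    rw [← this]; abel
  have hSl : Slam f = u := by
    have h2 := hSlam.inv u hTu
    rw [hΓ] at h2; exact h2
  have hTv : T' v = μt • (v : H) := hSt.in_ker w
  have hΓt : Γt1 v = w + (ContinuousLinearMap.adjoint B) (Γt2 v) := by
    have := hSt.trace w
    rw [← hv] at this
    rw [← this]; abel
  have hg := green u v
  rw [hTu, hTv, hΓt] at hg
  have hΓ1u : Γ1 u = f + B (Γ2 u) := by rw [← hΓ]; abel
  rw [hΓ1u] at hg
  simp only [inner_smul_right, inner_smul_left, inner_add_left, inner_add_right,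
    ContinuousLinearMap.adjoint_inner_left] at hg ⊢
  rw [hSl]
  simp only [map_sub, RingHom.id_apply, starRingEnd_apply, star_star]
  rw [← starRingEnd_apply]
  linear_combination hg
end
end

section
/- Let B : 𝓚 → 𝓗 be bounded, μ ∈ ρ(A_B), μ̃ ∈ ρ(Ã_{B*}), and let λ ∈ ρ(A_B) satisfy λ ≠ μ and λ ≠ conj(μ̃). For f ∈ 𝓗 and w ∈ 𝓚 put h = S_{μ,B}f and h̃ = S̃_{μ̃,B*}w. Then ⟨(A_B−λ)⁻¹h, h̃⟩_H = [(conj(μ̃) − λ)·⟨h, h̃⟩_H + ⟨f, Γ̃₂h̃⟩_𝓗 − ⟨M_B(λ)f, w⟩_𝓚] / ((μ − λ)(conj(μ̃) − λ)). Consequently the values ⟨(A_B−λ)⁻¹h, h̃⟩ for h ∈ Ran(S_{μ,B}) and h̃ ∈ Ran(S̃_{μ̃,B*}) are determined by the M-function M_B(λ) together with the solution operators. -/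
open scoped InnerProductSpace

noncomputable section

/-!
The element `x = (μ - λ)⁻¹ (S_{μ,B} f - S_{λ,B} f)` satisfies the boundary condition of `A_B`
(both solutions have the same boundary data `f`) and `(T - λ) x = S_{μ,B} f`, so it is
`(A_B - λ)⁻¹ S_{μ,B} f`. Pairing `S_{λ,B} f` with `S̃_{μ̃,B*} w` in the Green identity, the
`B`-terms of the boundary form cancel against the `B*`-terms, which expresses
`⟨S_{λ,B} f, S̃_{μ̃,B*} w⟩` through `f`, `Γ̃₂ S̃_{μ̃,B*} w`, `w` and `M_B(λ) f`.
-/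

section

variable {H E F : Type*}
  [NormedAddCommGroup H] [InnerProductSpace ℂ H]
  [NormedAddCommGroup E] [InnerProductSpace ℂ E]
  [NormedAddCommGroup F] [InnerProductSpace ℂ F]
  {dT : Submodule ℂ H} {T : ↥dT →ₗ[ℂ] H} {Γ1 : ↥dT →ₗ[ℂ] E} {Γ2 : ↥dT →ₗ[ℂ] F}
  {B : F →L[ℂ] E}

theorem IsSolOp.trace_eq_add {lam : ℂ} {S : E →ₗ[ℂ] ↥dT}
    (hS : IsSolOp dT T Γ1 Γ2 B lam S) (f : E) : Γ1 (S f) = f + B (Γ2 (S f)) :=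
  sub_eq_iff_eq_add.mp (hS.trace f)

theorem IsResolventAt.apply_solOp {lam μ : ℂ} (hne : lam ≠ μ) {R : H →L[ℂ] H}
    (hR : IsResolventAt dT T Γ1 Γ2 B lam R) {Slam Sμ : E →ₗ[ℂ] ↥dT}
    (hSlam : IsSolOp dT T Γ1 Γ2 B lam Slam) (hSμ : IsSolOp dT T Γ1 Γ2 B μ Sμ) (f : E) :
    R (Sμ f) = (μ - lam)⁻¹ • ((Sμ f : H) - Slam f) := by
  have hμ : μ - lam ≠ 0 := sub_ne_zero.mpr hne.symm
  set x : ↥dT := (μ - lam)⁻¹ • (Sμ f - Slam f)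
  have hbc : Γ1 x = B (Γ2 x) := by
    simp only [x, map_smul, map_sub, hSμ.trace_eq_add, hSlam.trace_eq_add]
    module
  have hTx : T x - lam • (x : H) = Sμ f := by
    simp only [x, map_smul, map_sub, SetLike.val_smul, Submodule.coe_sub,
      hSμ.in_ker, hSlam.in_ker]
    match_scalars <;> field_simp; ring
  have hx := hR.left_inv x hbc
  rw [hTx] at hx
  exact hx

end

section

variable {H E F : Type*}
  [NormedAddCommGroup H] [InnerProductSpace ℂ H]
  [NormedAddCommGroup E] [InnerProductSpace ℂ E] [CompleteSpace E]
  [NormedAddCommGroup F] [InnerProductSpace ℂ F] [CompleteSpace F]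
  {dT dT' : Submodule ℂ H} {T : ↥dT →ₗ[ℂ] H} {T' : ↥dT' →ₗ[ℂ] H}
  {Γ1 : ↥dT →ₗ[ℂ] E} {Γ2 : ↥dT →ₗ[ℂ] F} {Γt1 : ↥dT' →ₗ[ℂ] F} {Γt2 : ↥dT' →ₗ[ℂ] E}
  {B : F →L[ℂ] E}

theorem boundary_form_eq_of_boundary_conditions {u : ↥dT} {v : ↥dT'} {f : E} {w : F}
    (hu : Γ1 u = f + B (Γ2 u)) (hv : Γt1 v = w + B.adjoint (Γt2 v)) :
    ⟪Γt2 v, Γ1 u⟫_ℂ - ⟪Γt1 v, Γ2 u⟫_ℂ = ⟪Γt2 v, f⟫_ℂ - ⟪w, Γ2 u⟫_ℂ := by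
  rw [hu, hv, inner_add_right, inner_add_left, ContinuousLinearMap.adjoint_inner_left]
  ring

theorem inner_solOp_solOp_of_green
    (green : ∀ (u : ↥dT) (v : ↥dT'),
      ⟪(v : H), T u⟫_ℂ - ⟪T' v, (u : H)⟫_ℂ = ⟪Γt2 v, Γ1 u⟫_ℂ - ⟪Γt1 v, Γ2 u⟫_ℂ)
    {lam μt : ℂ} {S : E →ₗ[ℂ] ↥dT} (hS : IsSolOp dT T Γ1 Γ2 B lam S)
    {St : F →ₗ[ℂ] ↥dT'} (hSt : IsSolOp dT' T' Γt1 Γt2 B.adjoint μt St) (f : E) (w : F) :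
    (lam - starRingEnd ℂ μt) * ⟪(St w : H), S f⟫_ℂ
      = ⟪Γt2 (St w), f⟫_ℂ - ⟪w, Γ2 (S f)⟫_ℂ := by
  have h := green (S f) (St w)
  rw [hS.in_ker, hSt.in_ker, inner_smul_right, inner_smul_left,
    boundary_form_eq_of_boundary_conditions (hS.trace_eq_add f) (hSt.trace_eq_add w)] at h
  rw [← h]
  ring

end

theorem statement_6_general
    {H 𝓗 𝓚 : Type*}
    [NormedAddCommGroup H] [InnerProductSpace ℂ H]
    [NormedAddCommGroup 𝓗] [InnerProductSpace ℂ 𝓗] [CompleteSpace 𝓗]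
    [NormedAddCommGroup 𝓚] [InnerProductSpace ℂ 𝓚] [CompleteSpace 𝓚]
    (dT dT' : Submodule ℂ H)
    (T : ↥dT →ₗ[ℂ] H) (T' : ↥dT' →ₗ[ℂ] H)
    (Γ1 : ↥dT →ₗ[ℂ] 𝓗) (Γ2 : ↥dT →ₗ[ℂ] 𝓚)
    (Γt1 : ↥dT' →ₗ[ℂ] 𝓚) (Γt2 : ↥dT' →ₗ[ℂ] 𝓗)
    (green : ∀ (u : ↥dT) (v : ↥dT'),
      ⟪(v : H), T u⟫_ℂ - ⟪T' v, (u : H)⟫_ℂ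
        = ⟪Γt2 v, Γ1 u⟫_ℂ - ⟪Γt1 v, Γ2 u⟫_ℂ)
    (B : 𝓚 →L[ℂ] 𝓗) (lam μ μt : ℂ)
    (hne1 : lam ≠ μ) (hne2 : lam ≠ starRingEnd ℂ μt)
    (R : H →L[ℂ] H) (hR : IsResolventAt dT T Γ1 Γ2 B lam R)
    (Slam : 𝓗 →ₗ[ℂ] ↥dT) (hSlam : IsSolOp dT T Γ1 Γ2 B lam Slam)
    (Sμ : 𝓗 →ₗ[ℂ] ↥dT) (hSμ : IsSolOp dT T Γ1 Γ2 B μ Sμ)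
    (St : 𝓚 →ₗ[ℂ] ↥dT')
    (hSt : IsSolOp dT' T' Γt1 Γt2 (ContinuousLinearMap.adjoint B) μt St)
    (f : 𝓗) (w : 𝓚) :
    ⟪((St w : H)), R ((Sμ f : H))⟫_ℂ
      = ((starRingEnd ℂ μt - lam) * ⟪((St w : H)), ((Sμ f : H))⟫_ℂ
          + ⟪Γt2 (St w), f⟫_ℂ - ⟪w, Γ2 (Slam f)⟫_ℂ)
        / ((μ - lam) * (starRingEnd ℂ μt - lam)) := by
  have hμ : μ - lam ≠ 0 := sub_ne_zero.mpr hne1.symm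
  have hμt : starRingEnd ℂ μt - lam ≠ 0 := sub_ne_zero.mpr hne2.symm
  have hgreen := inner_solOp_solOp_of_green green hSlam hSt f w
  rw [hR.apply_solOp hne1 hSlam hSμ, inner_smul_right, inner_sub_right,
    eq_div_iff (mul_ne_zero hμ hμt)]
  field_simp
  linear_combination hgreen

/-- The bordered resolvent matrix elements are determined by the
M-function: for `λ ∈ ρ(A_B)` with `λ ≠ μ` and `λ ≠ conj μ̃`,
`⟨(A_B−λ)⁻¹h, h̃⟩ = [(conj μ̃ − λ)⟨h,h̃⟩ + ⟨f, Γ̃₂h̃⟩ − ⟨M_B(λ)f, w⟩] / ((μ−λ)(conj μ̃−λ))`. -/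
theorem statement_6
    {H 𝓗 𝓚 : Type*}
    [NormedAddCommGroup H] [InnerProductSpace ℂ H] [CompleteSpace H]
    [NormedAddCommGroup 𝓗] [InnerProductSpace ℂ 𝓗] [CompleteSpace 𝓗]
    [NormedAddCommGroup 𝓚] [InnerProductSpace ℂ 𝓚] [CompleteSpace 𝓚]
    (dT dT' : Submodule ℂ H)
    (T : ↥dT →ₗ[ℂ] H) (T' : ↥dT' →ₗ[ℂ] H)
    (Γ1 : ↥dT →ₗ[ℂ] 𝓗) (Γ2 : ↥dT →ₗ[ℂ] 𝓚)
    (Γt1 : ↥dT' →ₗ[ℂ] 𝓚) (Γt2 : ↥dT' →ₗ[ℂ] 𝓗)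
    (green : ∀ (u : ↥dT) (v : ↥dT'),
      ⟪(v : H), T u⟫_ℂ - ⟪T' v, (u : H)⟫_ℂ
        = ⟪Γt2 v, Γ1 u⟫_ℂ - ⟪Γt1 v, Γ2 u⟫_ℂ)
    (B : 𝓚 →L[ℂ] 𝓗) (lam μ μt : ℂ)
    (hne1 : lam ≠ μ) (hne2 : lam ≠ starRingEnd ℂ μt)
    (R : H →L[ℂ] H) (hR : IsResolventAt dT T Γ1 Γ2 B lam R)
    (Rμ : H →L[ℂ] H) (hRμ : IsResolventAt dT T Γ1 Γ2 B μ Rμ)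
    (Rt : H →L[ℂ] H)
    (hRt : IsResolventAt dT' T' Γt1 Γt2 (ContinuousLinearMap.adjoint B) μt Rt)
    (Slam : 𝓗 →ₗ[ℂ] ↥dT) (hSlam : IsSolOp dT T Γ1 Γ2 B lam Slam)
    (Sμ : 𝓗 →ₗ[ℂ] ↥dT) (hSμ : IsSolOp dT T Γ1 Γ2 B μ Sμ)
    (St : 𝓚 →ₗ[ℂ] ↥dT')
    (hSt : IsSolOp dT' T' Γt1 Γt2 (ContinuousLinearMap.adjoint B) μt St)
    (f : 𝓗) (w : 𝓚) :
    ⟪((St w : H)), R ((Sμ f : H))⟫_ℂ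
      = ((starRingEnd ℂ μt - lam) * ⟪((St w : H)), ((Sμ f : H))⟫_ℂ
          + ⟪Γt2 (St w), f⟫_ℂ - ⟪w, Γ2 (Slam f)⟫_ℂ)
        / ((μ - lam) * (starRingEnd ℂ μt - lam)) :=
  statement_6_general dT dT' T T' Γ1 Γ2 Γt1 Γt2 green B lam μ μt hne1 hne2 R hR Slam hSlam Sμ hSμ St
    hSt f w
end
end

section
/- Let B : 𝓚 → 𝓗 be bounded, μ ∈ ρ(A_B), μ̃ ∈ ρ(Ã_{B*}), and let D ⊆ ℂ be a nonempty open connected set such that U := D ∩ ρ(A_B) is nonempty. Fix f ∈ 𝓗 and w ∈ 𝓚. If there exists a function G, analytic on D, such that G(λ) = ⟨(A_B−λ)⁻¹S_{μ,B}f, S̃_{μ̃,B*}w⟩_H for all λ ∈ U, then there exists a function analytic on D that agrees with λ ↦ ⟨M_B(λ)f, w⟩_𝓚 on U; i.e. analytic continuation of the bordered-resolvent matrix elements to D yields an analytic continuation of the matrix elements of the M-function to D. -/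
open scoped InnerProductSpace

noncomputable section

/-- Analytic continuation of the bordered-resolvent matrix element to a
region `Dreg` yields an analytic continuation of the corresponding matrix element of the
M-function. -/
theorem statement_7
    {H 𝓗 𝓚 : Type*}
    [NormedAddCommGroup H] [InnerProductSpace ℂ H] [CompleteSpace H]
    [NormedAddCommGroup 𝓗] [InnerProductSpace ℂ 𝓗] [CompleteSpace 𝓗]
    [NormedAddCommGroup 𝓚] [InnerProductSpace ℂ 𝓚] [CompleteSpace 𝓚]
    (dT dT' : Submodule ℂ H)
    (T : ↥dT →ₗ[ℂ] H) (T' : ↥dT' →ₗ[ℂ] H)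
    (Γ1 : ↥dT →ₗ[ℂ] 𝓗) (Γ2 : ↥dT →ₗ[ℂ] 𝓚)
    (Γt1 : ↥dT' →ₗ[ℂ] 𝓚) (Γt2 : ↥dT' →ₗ[ℂ] 𝓗)
    (green : ∀ (u : ↥dT) (v : ↥dT'),
      ⟪(v : H), T u⟫_ℂ - ⟪T' v, (u : H)⟫_ℂ
        = ⟪Γt2 v, Γ1 u⟫_ℂ - ⟪Γt1 v, Γ2 u⟫_ℂ)
    (B : 𝓚 →L[ℂ] 𝓗)
    (res : Set ℂ)
    (hres : res = {lam : ℂ | ∃ R : H →L[ℂ] H, IsResolventAt dT T Γ1 Γ2 B lam R})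
    (R : ℂ → H →L[ℂ] H)
    (hR : ∀ lam ∈ res, IsResolventAt dT T Γ1 Γ2 B lam (R lam))
    (S : ℂ → 𝓗 →ₗ[ℂ] ↥dT)
    (hS : ∀ lam ∈ res, IsSolOp dT T Γ1 Γ2 B lam (S lam))
    (μ : ℂ) (hμ : μ ∈ res)
    (μt : ℂ) (Rt : H →L[ℂ] H)
    (hRt : IsResolventAt dT' T' Γt1 Γt2 (ContinuousLinearMap.adjoint B) μt Rt)
    (St : 𝓚 →ₗ[ℂ] ↥dT')
    (hSt : IsSolOp dT' T' Γt1 Γt2 (ContinuousLinearMap.adjoint B) μt St)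
    (Dreg : Set ℂ) (hDopen : IsOpen Dreg) (hDconn : IsConnected Dreg)
    (hU : (Dreg ∩ res).Nonempty)
    (f : 𝓗) (w : 𝓚)
    (G : ℂ → ℂ) (hG : DifferentiableOn ℂ G Dreg)
    (hGeq : ∀ lam ∈ Dreg ∩ res, G lam = ⟪((St w : H)), R lam ((S μ f : H))⟫_ℂ) :
    ∃ Mext : ℂ → ℂ, DifferentiableOn ℂ Mext Dreg ∧
      ∀ lam ∈ Dreg ∩ res, Mext lam = ⟪w, Γ2 (S lam f)⟫_ℂ := by
  classical
  refine ⟨fun lam => ⟪(Γt2 (St w)), f⟫_ℂ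
      - (lam - (starRingEnd ℂ) μt) *
        (⟪((St w : H)), ((S μ f : H))⟫_ℂ + (lam - μ) * G lam), ?_, ?_⟩
  · apply DifferentiableOn.sub (differentiableOn_const _)
    exact ((differentiable_id.sub_const _).differentiableOn).mul
      ((differentiableOn_const _).add
        (((differentiable_id.sub_const _).differentiableOn).mul hG))
  · rintro lam ⟨hlamD, hlam⟩
    have hSl := hS lam hlam
    have hRl := hR lam hlam
    have hSμ := hS μ hμ
    set uμ : ↥dT := S μ f with huμ
    set r : ↥dT := ⟨R lam (uμ : H), hRl.mem _⟩ with hr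
    set u : ↥dT := uμ + (lam - μ) • r with hu
    set v : ↥dT' := St w with hv
    have hTr : T r = (uμ : H) + lam • ((r : H)) := by
      have h := hRl.right_inv (uμ : H)
      have : T r - lam • ((r : H)) = (uμ : H) := h
      rw [sub_eq_iff_eq_add] at this
      exact this
    have hTu : T u = lam • ((u : H)) := by
      have : T u = T uμ + (lam - μ) • T r := by
        rw [hu, map_add, map_smul]
      rw [this, hSμ.in_ker f, hTr]
      have hcoe : ((u : H)) = (uμ : H) + (lam - μ) • ((r : H)) := by
        rw [hu]; simp
      rw [hcoe]
      module
    have hΓu : Γ1 u - B (Γ2 u) = f := by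
      have hbc : Γ1 r = B (Γ2 r) := hRl.bc (uμ : H)
      have : Γ1 u - B (Γ2 u)
          = (Γ1 uμ - B (Γ2 uμ)) + (lam - μ) • (Γ1 r - B (Γ2 r)) := by
        rw [hu]; simp [map_add, map_smul]; module
      rw [this, hbc, hSμ.trace f]
      simp
    have hSlam : S lam f = u := by
      have h := hSl.inv u hTu
      rwa [hΓu] at h
    have hTv : T' v = μt • ((v : H)) := hSt.in_ker w
    have hΓv : Γt1 v = (ContinuousLinearMap.adjoint B) (Γt2 v) + w := by
      have := hSt.trace w
      rw [sub_eq_iff_eq_add] at this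
      rw [this]; abel
    have key := green u v
    rw [hTu, hTv, hΓv] at key
    have hΓ1u : Γ1 u = B (Γ2 u) + f := by
      rw [← hΓu]; abel
    rw [hΓ1u] at key
    simp only [inner_smul_right, inner_smul_left, inner_add_right, inner_add_left,
      ContinuousLinearMap.adjoint_inner_left] at key
    -- key : lam * ⟪v,u⟫ - conj μt * ⟪v,u⟫ = (⟪Γt2 v, B Γ2 u⟫ + ⟪Γt2 v, f⟫) - (⟪Γt2 v, B Γ2 u⟫ + ⟪w, Γ2 u⟫)
    have hvu : ⟪((v : H)), ((u : H))⟫_ℂ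
        = ⟪((v : H)), ((uμ : H))⟫_ℂ + (lam - μ) * G lam := by
      have hcoe : ((u : H)) = (uμ : H) + (lam - μ) • ((r : H)) := by
        rw [hu]; simp
      rw [hcoe, inner_add_right, inner_smul_right, hGeq lam ⟨hlamD, hlam⟩]
    rw [hSlam]
    rw [hvu] at key
    linear_combination -key
end
end

section
/- Let B : 𝓚 → 𝓗 be bounded, μ ∈ ρ(A_B), μ̃ ∈ ρ(Ã_{B*}), f ∈ 𝓗, w ∈ 𝓚, and set F = S_{μ,B}f, v = S̃_{μ̃,B*}w. Let D ⊆ ℂ be open with U := D ∩ ρ(A_B) nonempty. If there exists a function G analytic on D with G(λ) = ⟨M_B(λ)f, w⟩_𝓚 for all λ ∈ U, then there exists a function H analytic on D with H(λ) = (λ − μ)(λ − conj(μ̃))·⟨(A_B−λ)⁻¹F, v⟩_H for all λ ∈ U; in other words, λ ↦ ⟨(A_B−λ)⁻¹F, v⟩ extends from U to a meromorphic function on D whose only possible poles are simple poles at μ and at conj(μ̃) (a pole of order at most 2 if μ = conj(μ̃)). -/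
open scoped InnerProductSpace

noncomputable section

/-- Analytic continuation of the M-function matrix element to an open set
`Dreg` yields an analytic continuation of `(λ−μ)(λ−conj μ̃)·⟨(A_B−λ)⁻¹F, v⟩`
(so the bordered resolvent extends meromorphically with only possible simple poles at `μ`
and `conj μ̃`). -/
theorem statement_8
    {H 𝓗 𝓚 : Type*}
    [NormedAddCommGroup H] [InnerProductSpace ℂ H] [CompleteSpace H]
    [NormedAddCommGroup 𝓗] [InnerProductSpace ℂ 𝓗] [CompleteSpace 𝓗]
    [NormedAddCommGroup 𝓚] [InnerProductSpace ℂ 𝓚] [CompleteSpace 𝓚]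
    (dT dT' : Submodule ℂ H)
    (T : ↥dT →ₗ[ℂ] H) (T' : ↥dT' →ₗ[ℂ] H)
    (Γ1 : ↥dT →ₗ[ℂ] 𝓗) (Γ2 : ↥dT →ₗ[ℂ] 𝓚)
    (Γt1 : ↥dT' →ₗ[ℂ] 𝓚) (Γt2 : ↥dT' →ₗ[ℂ] 𝓗)
    (green : ∀ (u : ↥dT) (v : ↥dT'),
      ⟪(v : H), T u⟫_ℂ - ⟪T' v, (u : H)⟫_ℂ
        = ⟪Γt2 v, Γ1 u⟫_ℂ - ⟪Γt1 v, Γ2 u⟫_ℂ)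
    (B : 𝓚 →L[ℂ] 𝓗)
    (res : Set ℂ)
    (hres : res = {lam : ℂ | ∃ R : H →L[ℂ] H, IsResolventAt dT T Γ1 Γ2 B lam R})
    (R : ℂ → H →L[ℂ] H)
    (hR : ∀ lam ∈ res, IsResolventAt dT T Γ1 Γ2 B lam (R lam))
    (S : ℂ → 𝓗 →ₗ[ℂ] ↥dT)
    (hS : ∀ lam ∈ res, IsSolOp dT T Γ1 Γ2 B lam (S lam))
    (μ : ℂ) (hμ : μ ∈ res)
    (μt : ℂ) (Rt : H →L[ℂ] H)
    (hRt : IsResolventAt dT' T' Γt1 Γt2 (ContinuousLinearMap.adjoint B) μt Rt)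
    (St : 𝓚 →ₗ[ℂ] ↥dT')
    (hSt : IsSolOp dT' T' Γt1 Γt2 (ContinuousLinearMap.adjoint B) μt St)
    (Dreg : Set ℂ) (hDopen : IsOpen Dreg)
    (hU : (Dreg ∩ res).Nonempty)
    (f : 𝓗) (w : 𝓚)
    (G : ℂ → ℂ) (hG : DifferentiableOn ℂ G Dreg)
    (hGeq : ∀ lam ∈ Dreg ∩ res, G lam = ⟪w, Γ2 (S lam f)⟫_ℂ) :
    ∃ Hf : ℂ → ℂ, DifferentiableOn ℂ Hf Dreg ∧
      ∀ lam ∈ Dreg ∩ res,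
        Hf lam = (lam - μ) * (lam - starRingEnd ℂ μt)
          * ⟪((St w : H)), R lam ((S μ f : H))⟫_ℂ := by
  refine ⟨fun lam => ⟪Γt2 (St w), f⟫_ℂ - G lam
      - (lam - starRingEnd ℂ μt) * ⟪((St w : H)), ((S μ f : H))⟫_ℂ, ?_, ?_⟩
  · apply DifferentiableOn.sub
    · exact (differentiableOn_const _).sub hG
    · exact (((differentiableOn_id).sub (differentiableOn_const _)).mul
        (differentiableOn_const _))
  · rintro lam ⟨hD, hrs⟩
    have hSl := hS lam hrs
    have hRl := hR lam hrs
    have hSμ := hS μ hμ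
    set v : ↥dT' := St w with hv
    set u : ↥dT := S lam f with hu
    set Fu : ↥dT := S μ f with hF
    -- Green identity computation
    have hgr := green u v
    have hTu : T u = lam • (u : H) := hSl.in_ker f
    have hT'v : T' v = μt • (v : H) := hSt.in_ker w
    have htr_u : Γ1 u - B (Γ2 u) = f := hSl.trace f
    have htr_v : Γt1 v = w + (ContinuousLinearMap.adjoint B) (Γt2 v) := by
      have := hSt.trace w
      linear_combination (norm := module) this
    have e1 : (lam - starRingEnd ℂ μt) * ⟪(v : H), (u : H)⟫_ℂ
        = ⟪Γt2 v, f⟫_ℂ - G lam := by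
      rw [hGeq lam ⟨hD, hrs⟩]
      have h1 : ⟪Γt2 v, f⟫_ℂ = ⟪Γt2 v, Γ1 u⟫_ℂ - ⟪Γt2 v, B (Γ2 u)⟫_ℂ := by
        rw [← inner_sub_right, htr_u]
      have h2 : ⟪Γt1 v, Γ2 u⟫_ℂ
          = ⟪w, Γ2 u⟫_ℂ + ⟪Γt2 v, B (Γ2 u)⟫_ℂ := by
        rw [htr_v, inner_add_left, ContinuousLinearMap.adjoint_inner_left]
      rw [hTu, hT'v, inner_smul_right, inner_smul_left] at hgr
      linear_combination hgr - h1 - h2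
    -- Resolvent computation
    have hmemd : Γ1 (Fu - u) = B (Γ2 (Fu - u)) := by
      have h1 := hSμ.trace f
      have h2 := hSl.trace f
      have : Γ1 (Fu - u) - B (Γ2 (Fu - u)) = 0 := by
        simp only [map_sub]
        linear_combination (norm := module) h1 - h2
      linear_combination (norm := module) this
    have hli := hRl.left_inv (Fu - u) hmemd
    have harg : T (Fu - u) - lam • ((Fu - u : ↥dT) : H)
        = (μ - lam) • (Fu : H) := by
      have hTF : T Fu = μ • (Fu : H) := hSμ.in_ker f
      simp only [map_sub, hTF, hTu]
      push_cast
      module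
    rw [harg, map_smul] at hli
    have e2 : (μ - lam) * ⟪(v : H), (R lam) (Fu : H)⟫_ℂ
        = ⟪(v : H), (Fu : H)⟫_ℂ - ⟪(v : H), (u : H)⟫_ℂ := by
      have := congrArg (fun x => ⟪(v : H), x⟫_ℂ) hli
      simp only [inner_smul_right] at this
      rw [this]
      push_cast
      rw [inner_sub_right]
    linear_combination (lam - starRingEnd ℂ μt) * e2 - e1
end
end

section
/- Let B : 𝓚 → 𝓗 be bounded and assume every nonreal λ ∈ ℂ belongs to ρ(A_B) and every nonreal μ̃ ∈ ℂ belongs to ρ(Ã_{B*}). Fix f ∈ 𝓗 and w ∈ 𝓚. Then the following are equivalent: (a) the restrictions of λ ↦ ⟨M_B(λ)f, w⟩_𝓚 to the upper half-plane ℂ₊ and to the lower half-plane ℂ₋ belong to the Nevanlinna classes N(ℂ₊) and N(ℂ₋) respectively; (b) for every μ ∈ ρ(A_B) and every μ̃ ∈ ρ(Ã_{B*}), the restrictions of λ ↦ ⟨(A_B−λ)⁻¹S_{μ,B}f, S̃_{μ̃,B*}w⟩_H to ℂ₊ and to ℂ₋ belong to N(ℂ₊) and N(ℂ₋) respectively.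 -/
/-!
With `M(λ) = ⟪w, Γ₂ S_λ f⟫`, the resolvent identity `(λ - μ) R_λ S_μ f = S_λ f - S_μ f` and the
Green identity for `S_λ f ∈ ker (T - λ)`, `S̃_μ̃ w ∈ ker (T' - μ̃)` give, for nonreal `λ`,
`⟪S̃ w, R_λ S_μ f⟫ (λ - μ) (λ - conj μ̃) = c - (λ - conj μ̃) k - M(λ)` with constants `c, k`.
On a half-plane, at distance `1` from `s = ∓ i`, the rational functions `(λ - a)/(λ - s)` and
`1/(λ - s)` are bounded and holomorphic, so dividing this identity by `(λ - s)²` shows that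
either side is of Nevanlinna class as soon as the other one is.
-/

open scoped InnerProductSpace

noncomputable section

/-- `F` belongs to the Nevanlinna class `N(Ω)`: it is the quotient of two bounded analytic
functions on `Ω` (with nonvanishing denominator somewhere, i.e. denominator not identically
zero). -/
def NevClass (Ω : Set ℂ) (F : ℂ → ℂ) : Prop :=
  ∃ g h : ℂ → ℂ,
    DifferentiableOn ℂ g Ω ∧ DifferentiableOn ℂ h Ω ∧
    (∃ Cg : ℝ, ∀ z ∈ Ω, ‖g z‖ ≤ Cg) ∧
    (∃ Ch : ℝ, ∀ z ∈ Ω, ‖h z‖ ≤ Ch) ∧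
    (∃ z ∈ Ω, h z ≠ 0) ∧
    ∀ z ∈ Ω, F z * h z = g z

open scoped ComplexConjugate

open Complex

def IsBddHolOn (Ω : Set ℂ) (φ : ℂ → ℂ) : Prop :=
  DifferentiableOn ℂ φ Ω ∧ ∃ C : ℝ, ∀ z ∈ Ω, ‖φ z‖ ≤ C

namespace IsBddHolOn

variable {Ω : Set ℂ} {φ ψ : ℂ → ℂ}

theorem const (c : ℂ) : IsBddHolOn Ω fun _ => c :=
  ⟨differentiableOn_const c, ‖c‖, fun _ _ => le_rfl⟩

theorem congr (hφ : IsBddHolOn Ω φ) (h : ∀ z ∈ Ω, ψ z = φ z) : IsBddHolOn Ω ψ := by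
  obtain ⟨hd, C, hC⟩ := hφ
  exact ⟨hd.congr h, C, fun z hz => (h z hz).symm ▸ hC z hz⟩

theorem add (hφ : IsBddHolOn Ω φ) (hψ : IsBddHolOn Ω ψ) : IsBddHolOn Ω fun z => φ z + ψ z := by
  obtain ⟨hφd, Cφ, hCφ⟩ := hφ
  obtain ⟨hψd, Cψ, hCψ⟩ := hψ
  exact ⟨hφd.add hψd, Cφ + Cψ,
    fun z hz => (norm_add_le _ _).trans (add_le_add (hCφ z hz) (hCψ z hz))⟩

theorem sub (hφ : IsBddHolOn Ω φ) (hψ : IsBddHolOn Ω ψ) : IsBddHolOn Ω fun z => φ z - ψ z := by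
  obtain ⟨hφd, Cφ, hCφ⟩ := hφ
  obtain ⟨hψd, Cψ, hCψ⟩ := hψ
  exact ⟨hφd.sub hψd, Cφ + Cψ,
    fun z hz => (norm_sub_le _ _).trans (add_le_add (hCφ z hz) (hCψ z hz))⟩

theorem mul (hφ : IsBddHolOn Ω φ) (hψ : IsBddHolOn Ω ψ) : IsBddHolOn Ω fun z => φ z * ψ z := by
  obtain ⟨hφd, Cφ, hCφ⟩ := hφ
  obtain ⟨hψd, Cψ, hCψ⟩ := hψ
  refine ⟨hφd.mul hψd, Cφ * Cψ, fun z hz => ?_⟩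
  rw [norm_mul]
  exact mul_le_mul (hCφ z hz) (hCψ z hz) (norm_nonneg _) ((norm_nonneg _).trans (hCφ z hz))

variable {s : ℂ} {r : ℝ}

theorem inv_sub (hr : 0 < r) (hs : ∀ z ∈ Ω, r ≤ ‖z - s‖) : IsBddHolOn Ω fun z => (z - s)⁻¹ := by
  have hne : ∀ z ∈ Ω, z - s ≠ 0 := fun z hz => norm_pos_iff.mp (hr.trans_le (hs z hz))
  refine ⟨(differentiableOn_id.sub_const s).inv hne, r⁻¹, fun z hz => ?_⟩
  rw [norm_inv]
  exact inv_anti₀ hr (hs z hz)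

theorem sub_mul_inv_sub (hr : 0 < r) (hs : ∀ z ∈ Ω, r ≤ ‖z - s‖) (a : ℂ) :
    IsBddHolOn Ω fun z => (z - a) * (z - s)⁻¹ := by
  refine ((const 1).add ((const (s - a)).mul (inv_sub hr hs))).congr fun z hz => ?_
  have : z - s ≠ 0 := norm_pos_iff.mp (hr.trans_le (hs z hz))
  field_simp
  ring

end IsBddHolOn

theorem IsOpen.exists_mem_ne_zero_notMem_of_finite {Ω : Set ℂ} (hΩ : IsOpen Ω) {h : ℂ → ℂ}
    (hh : ContinuousOn h Ω) (hh0 : ∃ z ∈ Ω, h z ≠ 0) {Z : Set ℂ} (hZ : Z.Finite) :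
    ∃ z ∈ Ω, h z ≠ 0 ∧ z ∉ Z := by
  obtain ⟨z₀, hz₀, hhz₀⟩ := hh0
  have hU : IsOpen (Ω ∩ h ⁻¹' {0}ᶜ) := hh.isOpen_inter_preimage hΩ isOpen_compl_singleton
  obtain ⟨z, ⟨hzΩ, hhz⟩, hzZ⟩ :=
    ((infinite_of_mem_nhds z₀ (hU.mem_nhds ⟨hz₀, hhz₀⟩)).sdiff hZ).nonempty
  exact ⟨z, hzΩ, hhz, hzZ⟩

theorem NevClass.of_mul_eq_sub_mul {Ω : Set ℂ} (hΩ : IsOpen Ω) {F G φ ψ ρ : ℂ → ℂ}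
    (hF : NevClass Ω F) (hφ : IsBddHolOn Ω φ) (hψ : IsBddHolOn Ω ψ) (hρ : IsBddHolOn Ω ρ)
    (hφ0 : {z ∈ Ω | φ z = 0}.Finite) (hG : ∀ z ∈ Ω, G z * φ z = ψ z - ρ z * F z) :
    NevClass Ω G := by
  obtain ⟨g, h, hgd, hhd, hgC, hhC, hh0, hFh⟩ := hF
  have hg : IsBddHolOn Ω g := ⟨hgd, hgC⟩
  have hh : IsBddHolOn Ω h := ⟨hhd, hhC⟩
  obtain ⟨z, hz, hhz, hφz⟩ := hΩ.exists_mem_ne_zero_notMem_of_finite hhd.continuousOn hh0 hφ0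
  have hnum := (hψ.mul hh).sub (hρ.mul hg)
  have hden := hφ.mul hh
  refine ⟨_, _, hnum.1, hden.1, hnum.2, hden.2, ⟨z, hz, mul_ne_zero (fun h0 => hφz ⟨hz, h0⟩) hhz⟩,
    fun z hz => ?_⟩
  linear_combination h z * hG z hz - ρ z * hFh z hz

theorem nevClass_iff_of_mul_sub_mul_sub {Ω : Set ℂ} (hΩ : IsOpen Ω) {s : ℂ} {r : ℝ} (hr : 0 < r)
    (hs : ∀ z ∈ Ω, r ≤ ‖z - s‖) {a b c k : ℂ} {F G : ℂ → ℂ}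
    (hid : ∀ z ∈ Ω, G z * ((z - a) * (z - b)) = c - (z - b) * k - F z) :
    NevClass Ω F ↔ NevClass Ω G := by
  have hne : ∀ z ∈ Ω, (z - s)⁻¹ ≠ 0 := fun z hz =>
    inv_ne_zero (norm_pos_iff.mp (hr.trans_le (hs z hz)))
  have hu := IsBddHolOn.inv_sub hr hs
  have hu2 := hu.mul hu
  have hφ := (IsBddHolOn.sub_mul_inv_sub hr hs a).mul (IsBddHolOn.sub_mul_inv_sub hr hs b)
  have hψ := ((IsBddHolOn.const c).mul hu).sub
    ((IsBddHolOn.sub_mul_inv_sub hr hs b).mul (IsBddHolOn.const k)) |>.mul hu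
  constructor
  · refine fun hF => hF.of_mul_eq_sub_mul hΩ hφ hψ hu2 ?_ fun z hz => ?_
    · refine (Set.toFinite {a, b}).subset fun z ⟨hz, h0⟩ => ?_
      simp only [mul_eq_zero, sub_eq_zero, hne z hz, or_false] at h0
      exact h0
    · linear_combination ((z - s)⁻¹ * (z - s)⁻¹) * hid z hz
  · refine fun hG => hG.of_mul_eq_sub_mul hΩ hu2 hψ hφ ?_ fun z hz => ?_
    · convert Set.finite_empty
      exact Set.eq_empty_of_forall_notMem fun z ⟨hz, h0⟩ => mul_ne_zero (hne z hz) (hne z hz) h0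
    · linear_combination ((z - s)⁻¹ * (z - s)⁻¹) * hid z hz

theorem one_le_norm_sub_neg_I {z : ℂ} (hz : 0 < z.im) : 1 ≤ ‖z - -I‖ := by
  refine le_trans ?_ (abs_im_le_norm _)
  rw [sub_im, neg_im, I_im, abs_of_pos (by linarith)]
  linarith

theorem one_le_norm_sub_I {z : ℂ} (hz : z.im < 0) : 1 ≤ ‖z - I‖ := by
  refine le_trans ?_ (abs_im_le_norm _)
  rw [sub_im, I_im, abs_of_neg (by linarith)]
  linarith

section BoundaryValueProblem

variable {H 𝓗 𝓚 : Type*}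
  [NormedAddCommGroup H] [InnerProductSpace ℂ H]
  [NormedAddCommGroup 𝓗] [InnerProductSpace ℂ 𝓗]
  [NormedAddCommGroup 𝓚] [InnerProductSpace ℂ 𝓚]
  {dT : Submodule ℂ H} {T : ↥dT →ₗ[ℂ] H} {Γ1 : ↥dT →ₗ[ℂ] 𝓗} {Γ2 : ↥dT →ₗ[ℂ] 𝓚}
  {B : 𝓚 →L[ℂ] 𝓗}

theorem IsResolventAt.sub_smul_apply_solOp {z μ : ℂ} {R : H →L[ℂ] H} {Sz Sμ : 𝓗 →ₗ[ℂ] ↥dT}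
    (hR : IsResolventAt dT T Γ1 Γ2 B z R) (hSz : IsSolOp dT T Γ1 Γ2 B z Sz)
    (hSμ : IsSolOp dT T Γ1 Γ2 B μ Sμ) (f : 𝓗) :
    (z - μ) • R (Sμ f : H) = (Sz f : H) - (Sμ f : H) := by
  have hbc : Γ1 (Sz f - Sμ f) = B (Γ2 (Sz f - Sμ f)) := by
    simp only [map_sub, sub_eq_iff_eq_add.mp (hSz.trace f), sub_eq_iff_eq_add.mp (hSμ.trace f)]
    abel
  have hT : T (Sz f - Sμ f) - z • ((Sz f - Sμ f : ↥dT) : H) = (z - μ) • (Sμ f : H) := by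
    rw [map_sub, hSz.in_ker, hSμ.in_ker]
    push_cast
    module
  rw [← map_smul, ← hT, hR.left_inv _ hbc]
  rfl

variable [CompleteSpace 𝓗] [CompleteSpace 𝓚]
  {dT' : Submodule ℂ H} {T' : ↥dT' →ₗ[ℂ] H} {Γt1 : ↥dT' →ₗ[ℂ] 𝓚} {Γt2 : ↥dT' →ₗ[ℂ] 𝓗}

theorem IsSolOp.sub_conj_mul_inner
    (green : ∀ (u : ↥dT) (v : ↥dT'),
      ⟪(v : H), T u⟫_ℂ - ⟪T' v, (u : H)⟫_ℂ = ⟪Γt2 v, Γ1 u⟫_ℂ - ⟪Γt1 v, Γ2 u⟫_ℂ)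
    {z μt : ℂ} {S : 𝓗 →ₗ[ℂ] ↥dT} {St : 𝓚 →ₗ[ℂ] ↥dT'} (hS : IsSolOp dT T Γ1 Γ2 B z S)
    (hSt : IsSolOp dT' T' Γt1 Γt2 (ContinuousLinearMap.adjoint B) μt St) (f : 𝓗) (w : 𝓚) :
    (z - conj μt) * ⟪(St w : H), (S f : H)⟫_ℂ = ⟪Γt2 (St w), f⟫_ℂ - ⟪w, Γ2 (S f)⟫_ℂ := by
  have hg := green (S f) (St w)
  rw [hS.in_ker f, hSt.in_ker w, inner_smul_right, inner_smul_left,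
    sub_eq_iff_eq_add.mp (hS.trace f), sub_eq_iff_eq_add.mp (hSt.trace w),
    inner_add_right, inner_add_left, ContinuousLinearMap.adjoint_inner_left] at hg
  linear_combination hg

theorem IsResolventAt.inner_apply_solOp_mul
    (green : ∀ (u : ↥dT) (v : ↥dT'),
      ⟪(v : H), T u⟫_ℂ - ⟪T' v, (u : H)⟫_ℂ = ⟪Γt2 v, Γ1 u⟫_ℂ - ⟪Γt1 v, Γ2 u⟫_ℂ)
    {z μ μt : ℂ} {R : H →L[ℂ] H} {Sz Sμ : 𝓗 →ₗ[ℂ] ↥dT} {St : 𝓚 →ₗ[ℂ] ↥dT'}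
    (hR : IsResolventAt dT T Γ1 Γ2 B z R) (hSz : IsSolOp dT T Γ1 Γ2 B z Sz)
    (hSμ : IsSolOp dT T Γ1 Γ2 B μ Sμ)
    (hSt : IsSolOp dT' T' Γt1 Γt2 (ContinuousLinearMap.adjoint B) μt St) (f : 𝓗) (w : 𝓚) :
    ⟪(St w : H), R (Sμ f : H)⟫_ℂ * ((z - μ) * (z - conj μt))
      = ⟪Γt2 (St w), f⟫_ℂ - (z - conj μt) * ⟪(St w : H), (Sμ f : H)⟫_ℂ - ⟪w, Γ2 (Sz f)⟫_ℂ := by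
  have hres : (z - μ) * ⟪(St w : H), R (Sμ f : H)⟫_ℂ
      = ⟪(St w : H), (Sz f : H)⟫_ℂ - ⟪(St w : H), (Sμ f : H)⟫_ℂ := by
    rw [← inner_sub_right, ← hR.sub_smul_apply_solOp hSz hSμ, inner_smul_right]
  linear_combination (z - conj μt) * hres + hSz.sub_conj_mul_inner green hSt f w

end BoundaryValueProblem

theorem statement_9_general
    {H 𝓗 𝓚 : Type*}
    [NormedAddCommGroup H] [InnerProductSpace ℂ H]
    [NormedAddCommGroup 𝓗] [InnerProductSpace ℂ 𝓗] [CompleteSpace 𝓗]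
    [NormedAddCommGroup 𝓚] [InnerProductSpace ℂ 𝓚] [CompleteSpace 𝓚]
    (dT dT' : Submodule ℂ H)
    (T : ↥dT →ₗ[ℂ] H) (T' : ↥dT' →ₗ[ℂ] H)
    (Γ1 : ↥dT →ₗ[ℂ] 𝓗) (Γ2 : ↥dT →ₗ[ℂ] 𝓚)
    (Γt1 : ↥dT' →ₗ[ℂ] 𝓚) (Γt2 : ↥dT' →ₗ[ℂ] 𝓗)
    (green : ∀ (u : ↥dT) (v : ↥dT'),
      ⟪(v : H), T u⟫_ℂ - ⟪T' v, (u : H)⟫_ℂ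
        = ⟪Γt2 v, Γ1 u⟫_ℂ - ⟪Γt1 v, Γ2 u⟫_ℂ)
    (B : 𝓚 →L[ℂ] 𝓗)
    (res rest : Set ℂ)
    (hallres : ∀ lam : ℂ, lam.im ≠ 0 → lam ∈ res)
    (hallrest : ∀ μt : ℂ, μt.im ≠ 0 → μt ∈ rest)
    (R : ℂ → H →L[ℂ] H)
    (hR : ∀ lam ∈ res, IsResolventAt dT T Γ1 Γ2 B lam (R lam))
    (S : ℂ → 𝓗 →ₗ[ℂ] ↥dT)
    (hS : ∀ lam ∈ res, IsSolOp dT T Γ1 Γ2 B lam (S lam))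
    (St : ℂ → 𝓚 →ₗ[ℂ] ↥dT')
    (hSt : ∀ μt ∈ rest,
      IsSolOp dT' T' Γt1 Γt2 (ContinuousLinearMap.adjoint B) μt (St μt))
    (f : 𝓗) (w : 𝓚) :
    (NevClass {z : ℂ | 0 < z.im} (fun lam => ⟪w, Γ2 (S lam f)⟫_ℂ)
        ∧ NevClass {z : ℂ | z.im < 0} (fun lam => ⟪w, Γ2 (S lam f)⟫_ℂ))
      ↔ ∀ μ ∈ res, ∀ μt ∈ rest,
          NevClass {z : ℂ | 0 < z.im}
            (fun lam => ⟪((St μt w : H)), R lam ((S μ f : H))⟫_ℂ)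
          ∧ NevClass {z : ℂ | z.im < 0}
            (fun lam => ⟪((St μt w : H)), R lam ((S μ f : H))⟫_ℂ) := by
  have transfer : ∀ μ ∈ res, ∀ μt ∈ rest,
      (NevClass {z : ℂ | 0 < z.im} (fun lam => ⟪w, Γ2 (S lam f)⟫_ℂ)
        ↔ NevClass {z : ℂ | 0 < z.im} (fun lam => ⟪(St μt w : H), R lam (S μ f : H)⟫_ℂ))
      ∧ (NevClass {z : ℂ | z.im < 0} (fun lam => ⟪w, Γ2 (S lam f)⟫_ℂ)
        ↔ NevClass {z : ℂ | z.im < 0} (fun lam => ⟪(St μt w : H), R lam (S μ f : H)⟫_ℂ)) := by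
    intro μ hμ μt hμt
    have key := fun z (hz : z.im ≠ 0) => (hR z (hallres z hz)).inner_apply_solOp_mul green
      (hS z (hallres z hz)) (hS μ hμ) (hSt μt hμt) f w
    exact ⟨nevClass_iff_of_mul_sub_mul_sub (isOpen_lt continuous_const continuous_im) one_pos
        (fun _ hz => one_le_norm_sub_neg_I hz) fun z hz => key z hz.ne',
      nevClass_iff_of_mul_sub_mul_sub (isOpen_lt continuous_im continuous_const) one_pos
        (fun _ hz => one_le_norm_sub_I hz) fun z hz => key z hz.ne⟩
  refine ⟨fun ⟨hMup, hMlow⟩ μ hμ μt hμt =>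
    ⟨(transfer μ hμ μt hμt).1.mp hMup, (transfer μ hμ μt hμt).2.mp hMlow⟩, fun hG => ?_⟩
  have hI : I ∈ res := hallres I (by simp)
  have hIt : I ∈ rest := hallrest I (by simp)
  obtain ⟨hup, hlow⟩ := transfer I hI I hIt
  exact ⟨hup.mpr (hG I hI I hIt).1, hlow.mpr (hG I hI I hIt).2⟩

/-- Assuming all nonreal points lie in `ρ(A_B)` and `ρ(Ã_{B*})`:
the matrix elements of the M-function are of Nevanlinna class on both half-planes iff,
for every `μ ∈ ρ(A_B)` and `μ̃ ∈ ρ(Ã_{B*})`, the corresponding bordered-resolvent matrix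
elements are of Nevanlinna class on both half-planes. -/
theorem statement_9
    {H 𝓗 𝓚 : Type*}
    [NormedAddCommGroup H] [InnerProductSpace ℂ H] [CompleteSpace H]
    [NormedAddCommGroup 𝓗] [InnerProductSpace ℂ 𝓗] [CompleteSpace 𝓗]
    [NormedAddCommGroup 𝓚] [InnerProductSpace ℂ 𝓚] [CompleteSpace 𝓚]
    (dT dT' : Submodule ℂ H)
    (T : ↥dT →ₗ[ℂ] H) (T' : ↥dT' →ₗ[ℂ] H)
    (Γ1 : ↥dT →ₗ[ℂ] 𝓗) (Γ2 : ↥dT →ₗ[ℂ] 𝓚)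
    (Γt1 : ↥dT' →ₗ[ℂ] 𝓚) (Γt2 : ↥dT' →ₗ[ℂ] 𝓗)
    (green : ∀ (u : ↥dT) (v : ↥dT'),
      ⟪(v : H), T u⟫_ℂ - ⟪T' v, (u : H)⟫_ℂ
        = ⟪Γt2 v, Γ1 u⟫_ℂ - ⟪Γt1 v, Γ2 u⟫_ℂ)
    (B : 𝓚 →L[ℂ] 𝓗)
    (res rest : Set ℂ)
    (hres : res = {lam : ℂ | ∃ R : H →L[ℂ] H, IsResolventAt dT T Γ1 Γ2 B lam R})
    (hrest : rest = {μt : ℂ | ∃ Rt : H →L[ℂ] H,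
      IsResolventAt dT' T' Γt1 Γt2 (ContinuousLinearMap.adjoint B) μt Rt})
    (hallres : ∀ lam : ℂ, lam.im ≠ 0 → lam ∈ res)
    (hallrest : ∀ μt : ℂ, μt.im ≠ 0 → μt ∈ rest)
    (R : ℂ → H →L[ℂ] H)
    (hR : ∀ lam ∈ res, IsResolventAt dT T Γ1 Γ2 B lam (R lam))
    (S : ℂ → 𝓗 →ₗ[ℂ] ↥dT)
    (hS : ∀ lam ∈ res, IsSolOp dT T Γ1 Γ2 B lam (S lam))
    (St : ℂ → 𝓚 →ₗ[ℂ] ↥dT')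
    (hSt : ∀ μt ∈ rest,
      IsSolOp dT' T' Γt1 Γt2 (ContinuousLinearMap.adjoint B) μt (St μt))
    (f : 𝓗) (w : 𝓚) :
    (NevClass {z : ℂ | 0 < z.im} (fun lam => ⟪w, Γ2 (S lam f)⟫_ℂ)
        ∧ NevClass {z : ℂ | z.im < 0} (fun lam => ⟪w, Γ2 (S lam f)⟫_ℂ))
      ↔ ∀ μ ∈ res, ∀ μt ∈ rest,
          NevClass {z : ℂ | 0 < z.im}
            (fun lam => ⟪((St μt w : H)), R lam ((S μ f : H))⟫_ℂ)
          ∧ NevClass {z : ℂ | z.im < 0}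
            (fun lam => ⟪((St μt w : H)), R lam ((S μ f : H))⟫_ℂ) :=
  statement_9_general dT dT' T T' Γ1 Γ2 Γt1 Γt2 green B res rest hallres hallrest R hR S hS St hSt f
    w
end
end

section
/- Let B : 𝓚 → 𝓗 be bounded, let I be an index set, let (f_i)_{i∈I} be a linearly independent family in 𝓗, and let (μ_i)_{i∈I} be nonreal complex numbers (not necessarily distinct) with μ_i ∈ ρ(A_B) for every i. Then the family (S_{μ_i,B} f_i)_{i∈I} is linearly independent in H. -/
open scoped InnerProductSpace

noncomputable section

/-- If `(f_i)` is linearly independent in `𝓗` and each `μ_i` is nonreal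
with `μ_i ∈ ρ(A_B)`, then `(S_{μ_i,B} f_i)` is linearly independent in `H`. -/
theorem statement_10
    {H 𝓗 𝓚 : Type*}
    [NormedAddCommGroup H] [InnerProductSpace ℂ H] [CompleteSpace H]
    [NormedAddCommGroup 𝓗] [InnerProductSpace ℂ 𝓗] [CompleteSpace 𝓗]
    [NormedAddCommGroup 𝓚] [InnerProductSpace ℂ 𝓚] [CompleteSpace 𝓚]
    (dT : Submodule ℂ H) (T : ↥dT →ₗ[ℂ] H)
    (Γ1 : ↥dT →ₗ[ℂ] 𝓗) (Γ2 : ↥dT →ₗ[ℂ] 𝓚)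
    (B : 𝓚 →L[ℂ] 𝓗)
    {I : Type*} (f : I → 𝓗) (hf : LinearIndependent ℂ f)
    (μ : I → ℂ) (hμim : ∀ i, (μ i).im ≠ 0)
    (R : I → H →L[ℂ] H) (hR : ∀ i, IsResolventAt dT T Γ1 Γ2 B (μ i) (R i))
    (S : I → 𝓗 →ₗ[ℂ] ↥dT) (hS : ∀ i, IsSolOp dT T Γ1 Γ2 B (μ i) (S i)) :
    LinearIndependent ℂ (fun i : I => ((S i (f i) : H))) := by
  have hsub : LinearIndependent ℂ (fun i : I => S i (f i)) := by
    apply LinearIndependent.of_comp (Γ1 - ((B : 𝓚 →ₗ[ℂ] 𝓗) ∘ₗ Γ2))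
    have heq : (fun i : I => (Γ1 - ((B : 𝓚 →ₗ[ℂ] 𝓗) ∘ₗ Γ2)) (S i (f i))) = f := by
      funext i
      simpa using (hS i).trace (f i)
    rw [show ((Γ1 - ((B : 𝓚 →ₗ[ℂ] 𝓗) ∘ₗ Γ2)) ∘ fun i : I => S i (f i))
        = fun i : I => (Γ1 - ((B : 𝓚 →ₗ[ℂ] 𝓗) ∘ₗ Γ2)) (S i (f i)) from rfl, heq]
    exact hf
  exact hsub.map' dT.subtype dT.ker_subtype
end
end

section
/- Let B : 𝓚 → 𝓗 be bounded, let (f_i)_{i∈I} be a linearly independent family in 𝓗, and let (μ_ℓ)_{ℓ∈J} be a family of pairwise distinct nonreal complex numbers with μ_ℓ ∈ ρ(A_B) for every ℓ. Then the doubly indexed family (S_{μ_ℓ,B} f_i)_{(i,ℓ)∈I×J} is linearly independent in H. -/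
open scoped InnerProductSpace

noncomputable section

/-- Eigenvectors of `T` (viewed in `dT`) at pairwise distinct eigenvalues summing to zero
must all vanish. -/
lemma eig_indep_aux {H : Type*} [NormedAddCommGroup H] [InnerProductSpace ℂ H]
    (dT : Submodule ℂ H) (T : ↥dT →ₗ[ℂ] H) {J : Type*} (μ : J → ℂ)
    (hμinj : Function.Injective μ) :
    ∀ (s : Finset J) (w : J → ↥dT),
      (∀ l ∈ s, T (w l) = μ l • ((w l : H))) →
      (∑ l ∈ s, w l) = 0 → ∀ l ∈ s, w l = 0 := by
  classical
  intro s
  induction s using Finset.induction_on with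
  | empty => intro w _ _ l hl; exact absurd hl (Finset.notMem_empty l)
  | @insert l0 s' hl0 ih =>
    intro w hw hsum l hl
    have hsum' : w l0 + ∑ m ∈ s', w m = 0 := by
      rwa [Finset.sum_insert hl0] at hsum
    -- sum of μ m • w m is zero
    have hT : ∑ m ∈ Insert.insert l0 s', μ m • w m = 0 := by
      have h1 : ((∑ m ∈ Insert.insert l0 s', μ m • w m : ↥dT) : H)
          = T (∑ m ∈ Insert.insert l0 s', w m) := by
        rw [map_sum]
        push_cast
        refine Finset.sum_congr rfl fun m hm => ?_
        rw [hw m hm]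
      rw [hsum, map_zero] at h1
      exact Subtype.coe_injective h1
    have hkey : ∑ m ∈ s', (μ m - μ l0) • w m = 0 := by
      have h2 : ∑ m ∈ Insert.insert l0 s', (μ m - μ l0) • w m = 0 := by
        have : ∑ m ∈ Insert.insert l0 s', (μ m - μ l0) • w m
            = (∑ m ∈ Insert.insert l0 s', μ m • w m)
              - μ l0 • (∑ m ∈ Insert.insert l0 s', w m) := by
          rw [Finset.smul_sum, ← Finset.sum_sub_distrib]
          refine Finset.sum_congr rfl fun m _ => ?_
          rw [sub_smul]
        rw [this, hT, hsum, smul_zero, sub_zero]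
      rwa [Finset.sum_insert hl0, sub_self, zero_smul, zero_add] at h2
    have hzero' : ∀ m ∈ s', w m = 0 := by
      intro m hm
      have := ih (fun m => (μ m - μ l0) • w m)
        (fun m hm => by
          simp only [map_smul]
          rw [hw m (Finset.mem_insert_of_mem hm)]
          push_cast
          rw [smul_comm]) hkey m hm
      have hne : μ m - μ l0 ≠ 0 := by
        intro h
        apply hl0
        have : μ m = μ l0 := by linear_combination h
        rwa [← hμinj this]
      simpa [smul_eq_zero, hne] using this
    rcases Finset.mem_insert.mp hl with rfl | hl'
    · have : ∑ m ∈ s', w m = 0 := Finset.sum_eq_zero hzero'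
      rw [this, add_zero] at hsum'
      exact hsum'
    · exact hzero' l hl'

/-- If `(f_i)_{i∈I}` is linearly independent in `𝓗` and `(μ_ℓ)_{ℓ∈J}`
are pairwise distinct nonreal points of `ρ(A_B)`, then the doubly indexed family
`(S_{μ_ℓ,B} f_i)_{(i,ℓ)}` is linearly independent in `H`. -/

theorem statement_11
    {H 𝓗 𝓚 : Type*}
    [NormedAddCommGroup H] [InnerProductSpace ℂ H] [CompleteSpace H]
    [NormedAddCommGroup 𝓗] [InnerProductSpace ℂ 𝓗] [CompleteSpace 𝓗]
    [NormedAddCommGroup 𝓚] [InnerProductSpace ℂ 𝓚] [CompleteSpace 𝓚]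
    (dT : Submodule ℂ H) (T : ↥dT →ₗ[ℂ] H)
    (Γ1 : ↥dT →ₗ[ℂ] 𝓗) (Γ2 : ↥dT →ₗ[ℂ] 𝓚)
    (B : 𝓚 →L[ℂ] 𝓗)
    {I J : Type*} (f : I → 𝓗) (hf : LinearIndependent ℂ f)
    (μ : J → ℂ) (hμinj : Function.Injective μ) (hμim : ∀ l, (μ l).im ≠ 0)
    (R : J → H →L[ℂ] H) (hR : ∀ l, IsResolventAt dT T Γ1 Γ2 B (μ l) (R l))
    (S : J → 𝓗 →ₗ[ℂ] ↥dT) (hS : ∀ l, IsSolOp dT T Γ1 Γ2 B (μ l) (S l)) :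
    LinearIndependent ℂ (fun p : I × J => ((S p.2 (f p.1) : H))) := by
  classical
  rw [linearIndependent_iff']
  intro s g hsum p hp
  have hwcoe : ∀ l : J, ((S l (∑ q ∈ s.filter (fun q => q.2 = l), g q • f q.1) : H))
      = ∑ q ∈ s.filter (fun q => q.2 = l), g q • ((S q.2 (f q.1) : H)) := by
    intro l
    simp only [map_sum, map_smul]
    push_cast
    refine Finset.sum_congr rfl fun q hq => ?_
    rw [(Finset.mem_filter.mp hq).2]
  have hsum2 : ∑ l ∈ s.image Prod.snd,
      ((S l (∑ q ∈ s.filter (fun q => q.2 = l), g q • f q.1) : H)) = 0 := by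
    rw [Finset.sum_congr rfl fun l _ => hwcoe l]
    exact (Finset.sum_fiberwise_of_maps_to
      (fun q hq => Finset.mem_image_of_mem Prod.snd hq) _).trans hsum
  have hsum3 : (∑ l ∈ s.image Prod.snd,
      S l (∑ q ∈ s.filter (fun q => q.2 = l), g q • f q.1)) = 0 := by
    apply Subtype.coe_injective
    push_cast
    simpa using hsum2
  have hwzero : ∀ l ∈ s.image Prod.snd,
      S l (∑ q ∈ s.filter (fun q => q.2 = l), g q • f q.1) = 0 :=
    eig_indep_aux dT T μ hμinj _ _ (fun l _ => (hS l).in_ker _) hsum3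
  have hezero : ∀ l ∈ s.image Prod.snd,
      (∑ q ∈ s.filter (fun q => q.2 = l), g q • f q.1) = 0 := by
    intro l hl
    have htr := (hS l).trace (∑ q ∈ s.filter (fun q => q.2 = l), g q • f q.1)
    rw [hwzero l hl] at htr
    simpa using htr.symm
  -- now use linear independence of f
  have hl : p.2 ∈ s.image Prod.snd := Finset.mem_image_of_mem Prod.snd hp
  have he2 : ∑ i ∈ (s.filter (fun q => q.2 = p.2)).image Prod.fst,
      g (i, p.2) • f i = 0 := by
    rw [Finset.sum_image (fun a ha b hb h => ?_)]
    · rw [← hezero p.2 hl]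
      refine Finset.sum_congr rfl fun q hq => ?_
      obtain ⟨q1, q2⟩ := q
      obtain rfl : q2 = p.2 := (Finset.mem_filter.mp hq).2
      rfl
    · have ha2 := (Finset.mem_filter.mp ha).2
      have hb2 := (Finset.mem_filter.mp hb).2
      obtain ⟨a1, a2⟩ := a
      obtain ⟨b1, b2⟩ := b
      simp only at h ha2 hb2
      rw [h, ha2, hb2]
  have := linearIndependent_iff'.mp hf _ _ he2 p.1
    (Finset.mem_image_of_mem Prod.fst (Finset.mem_filter.mpr ⟨hp, rfl⟩))
  simpa using this
end
end

section
/- Let B, C : 𝓚 → 𝓗 be bounded with λ ∈ ρ(A_B) ∩ ρ(A_C), and write R_C = (A_C−λ)⁻¹. Assume there is a bounded operator R̃_C : H → H with range contained in D(T') such that for all y ∈ H: (T' − λ̄)R̃_C y = y, Γ̃₁R̃_C y = C*Γ̃₂R̃_C y, and ⟨R_C x, y⟩_H = ⟨x, R̃_C y⟩_H for all x ∈ H (R̃_C is the adjoint resolvent of Ã_{C*} at λ̄). Let S̄, S̃̄ ⊆ H be subsets such that the linear span of {Γ₂R_C h : h ∈ S̄} is dense in 𝓚 and the linear span of {Γ̃₂R̃_C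 h̃ : h̃ ∈ S̃̄} is dense in 𝓗. Assume Ran(B − C) is dense in 𝓗 and ker(B − C) = {0}. Then for any two bounded operators N₁, N₂ : 𝓗 → 𝓚 satisfying ⟨S_{λ,C}(Id + (B−C)N₁)(B−C)Γ₂R_C h, h̃⟩_H = ⟨S_{λ,C}(Id + (B−C)N₂)(B−C)Γ₂R_C h, h̃⟩_H for all h ∈ S̄ and h̃ ∈ S̃̄, one has N₁ = N₂. In particular, since Krein's resolvent formula gives (A_B−λ)⁻¹ − (A_C−λ)⁻¹ = S_{λ,C}(Id + (B−C)M_B(λ))(B−C)Γ₂(A_C−λ)⁻¹, the operator M_B(λ) is uniquely determined by the difference of the two resolvents paired between S̄ and S̃̄. -/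
open scoped InnerProductSpace

noncomputable section

/-
Pairing the solution operator `S_{λ,C}` against `y = (T' - λ̄) R̃_C y` and applying Green's
identity turns `⟪y, S_{λ,C} g⟫` into `-⟪Γ̃₂ R̃_C y, g⟫`, since `S_{λ,C} g ∈ ker (T - λ)`,
`(Γ₁ - C Γ₂) S_{λ,C} g = g` and `Γ̃₁ R̃_C y = C* Γ̃₂ R̃_C y`. With `D = B - C`, equality of the
pairings therefore says that `D (N₁ - N₂) D Γ₂ R_C h` is orthogonal to a set with dense span,
hence zero. Injectivity of `D`, density of the traces `Γ₂ R_C h` and density of `Ran D` then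
peel off the factors one at a time.
-/

section Density

variable {𝕜 E F G : Type*} [RCLike 𝕜]

theorem eq_zero_of_inner_right_of_dense_span [NormedAddCommGroup E] [InnerProductSpace 𝕜 E]
    {s : Set E} (hs : Dense (Submodule.span 𝕜 s : Set E)) {x : E}
    (h : ∀ v ∈ s, ⟪v, x⟫_𝕜 = 0) : x = 0 := by
  have hx : innerSL 𝕜 x = 0 :=
    ContinuousLinearMap.ext_on hs fun v hv => inner_eq_zero_symm.mp (h v hv)
  simpa using congr($hx x)

theorem ContinuousLinearMap.eq_zero_of_comp_eq_zero_on_dense_span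
    [NormedAddCommGroup E] [NormedSpace 𝕜 E] [NormedAddCommGroup F] [NormedSpace 𝕜 F]
    [NormedAddCommGroup G] [NormedSpace 𝕜 G]
    {K : F →L[𝕜] G} {D : E →L[𝕜] F} (hD : DenseRange D)
    {s : Set E} (hs : Dense (Submodule.span 𝕜 s : Set E)) (h : ∀ a ∈ s, K (D a) = 0) :
    K = 0 := by
  have hKD : K.comp D = 0 := ContinuousLinearMap.ext_on hs h
  exact DFunLike.coe_injective <|
    hD.equalizer K.continuous continuous_zero congr(⇑$hKD)

end Density

theorem IsSolOp.inner_eq_neg_inner_trace {H E F : Type*}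
    [NormedAddCommGroup H] [InnerProductSpace ℂ H]
    [NormedAddCommGroup E] [InnerProductSpace ℂ E] [CompleteSpace E]
    [NormedAddCommGroup F] [InnerProductSpace ℂ F] [CompleteSpace F]
    {dT dT' : Submodule ℂ H} {T : ↥dT →ₗ[ℂ] H} {T' : ↥dT' →ₗ[ℂ] H}
    {Γ1 : ↥dT →ₗ[ℂ] E} {Γ2 : ↥dT →ₗ[ℂ] F} {Γt1 : ↥dT' →ₗ[ℂ] F} {Γt2 : ↥dT' →ₗ[ℂ] E}
    (green : ∀ (u : ↥dT) (v : ↥dT'),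
      ⟪(v : H), T u⟫_ℂ - ⟪T' v, (u : H)⟫_ℂ = ⟪Γt2 v, Γ1 u⟫_ℂ - ⟪Γt1 v, Γ2 u⟫_ℂ)
    {C : F →L[ℂ] E} {lam : ℂ} {S : E →ₗ[ℂ] ↥dT} (hS : IsSolOp dT T Γ1 Γ2 C lam S)
    {v : ↥dT'} (hv : Γt1 v = ContinuousLinearMap.adjoint C (Γt2 v)) (g : E) :
    ⟪T' v - starRingEnd ℂ lam • (v : H), (S g : H)⟫_ℂ = -⟪Γt2 v, g⟫_ℂ := by
  have hgreen := green (S g) v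
  rw [hS.in_ker, hv, ContinuousLinearMap.adjoint_inner_left, ← inner_sub_right, hS.trace,
    inner_smul_right] at hgreen
  rw [inner_sub_left, inner_smul_left, Complex.conj_conj]
  linear_combination -hgreen

theorem statement_12_general
    {H 𝓗 𝓚 : Type*}
    [NormedAddCommGroup H] [InnerProductSpace ℂ H]
    [NormedAddCommGroup 𝓗] [InnerProductSpace ℂ 𝓗] [CompleteSpace 𝓗]
    [NormedAddCommGroup 𝓚] [InnerProductSpace ℂ 𝓚] [CompleteSpace 𝓚]
    (dT dT' : Submodule ℂ H)
    (T : ↥dT →ₗ[ℂ] H) (T' : ↥dT' →ₗ[ℂ] H)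
    (Γ1 : ↥dT →ₗ[ℂ] 𝓗) (Γ2 : ↥dT →ₗ[ℂ] 𝓚)
    (Γt1 : ↥dT' →ₗ[ℂ] 𝓚) (Γt2 : ↥dT' →ₗ[ℂ] 𝓗)
    (green : ∀ (u : ↥dT) (v : ↥dT'),
      ⟪(v : H), T u⟫_ℂ - ⟪T' v, (u : H)⟫_ℂ
        = ⟪Γt2 v, Γ1 u⟫_ℂ - ⟪Γt1 v, Γ2 u⟫_ℂ)
    (B C : 𝓚 →L[ℂ] 𝓗) (lam : ℂ)
    (RC : H →L[ℂ] H) (hRC : IsResolventAt dT T Γ1 Γ2 C lam RC)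
    (RtC : H →L[ℂ] H)
    (hmem : ∀ y : H, RtC y ∈ dT')
    (hinv : ∀ y : H, T' ⟨RtC y, hmem y⟩ - (starRingEnd ℂ lam) • RtC y = y)
    (hbc : ∀ y : H, Γt1 ⟨RtC y, hmem y⟩
      = (ContinuousLinearMap.adjoint C) (Γt2 ⟨RtC y, hmem y⟩))
    (SC : 𝓗 →ₗ[ℂ] ↥dT) (hSC : IsSolOp dT T Γ1 Γ2 C lam SC)
    (Sbar Stbar : Set H)
    (hdense1 : Dense ((Submodule.span ℂ
      ((fun h : H => Γ2 ⟨RC h, hRC.mem h⟩) '' Sbar) : Submodule ℂ 𝓚) : Set 𝓚))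
    (hdense2 : Dense ((Submodule.span ℂ
      ((fun h : H => Γt2 ⟨RtC h, hmem h⟩) '' Stbar) : Submodule ℂ 𝓗) : Set 𝓗))
    (hBCrange : DenseRange ⇑(B - C))
    (hBCker : LinearMap.ker ((B - C : 𝓚 →L[ℂ] 𝓗) : 𝓚 →ₗ[ℂ] 𝓗) = ⊥)
    (N₁ N₂ : 𝓗 →L[ℂ] 𝓚)
    (heq : ∀ h ∈ Sbar, ∀ ht ∈ Stbar,
      ⟪ht, ((SC ((B - C) (Γ2 ⟨RC h, hRC.mem h⟩)
            + (B - C) (N₁ ((B - C) (Γ2 ⟨RC h, hRC.mem h⟩)))) : H))⟫_ℂ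
        = ⟪ht, ((SC ((B - C) (Γ2 ⟨RC h, hRC.mem h⟩)
            + (B - C) (N₂ ((B - C) (Γ2 ⟨RC h, hRC.mem h⟩)))) : H))⟫_ℂ) :
    N₁ = N₂ := by
  set D := B - C
  have hpair (y : H) (g : 𝓗) : ⟪y, (SC g : H)⟫_ℂ = -⟪Γt2 ⟨RtC y, hmem y⟩, g⟫_ℂ := by
    conv_lhs => rw [← hinv y]
    exact hSC.inner_eq_neg_inner_trace green (hbc y) g
  have hDKD : ∀ h ∈ Sbar, D ((N₁ - N₂) (D (Γ2 ⟨RC h, hRC.mem h⟩))) = 0 := by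
    intro h hh
    refine eq_zero_of_inner_right_of_dense_span hdense2 ?_
    rintro _ ⟨ht, hht, rfl⟩
    have := heq h hh ht hht
    rw [hpair, hpair, inner_add_right, inner_add_right] at this
    rw [sub_apply N₁ N₂, map_sub, inner_sub_right]
    linear_combination -this
  have hD_inj : Function.Injective D := LinearMap.ker_eq_bot.mp hBCker
  refine sub_eq_zero.mp <|
    ContinuousLinearMap.eq_zero_of_comp_eq_zero_on_dense_span hBCrange hdense1 ?_
  rintro _ ⟨h, hh, rfl⟩
  exact (injective_iff_map_eq_zero D).mp hD_inj _ (hDKD h hh)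

/-- Uniqueness of the M-function from the difference of two resolvents
paired between (spanning subsets of) the detectable subspaces: with `R_C = (A_C−λ)⁻¹`,
its adjoint `R̃_C`, dense spans of traces, `Ran(B−C)` dense and `ker(B−C) = 0`, any two
bounded `N₁, N₂` producing the same Krein-formula pairings coincide. -/
theorem statement_12
    {H 𝓗 𝓚 : Type*}
    [NormedAddCommGroup H] [InnerProductSpace ℂ H] [CompleteSpace H]
    [NormedAddCommGroup 𝓗] [InnerProductSpace ℂ 𝓗] [CompleteSpace 𝓗]
    [NormedAddCommGroup 𝓚] [InnerProductSpace ℂ 𝓚] [CompleteSpace 𝓚]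
    (dT dT' : Submodule ℂ H)
    (T : ↥dT →ₗ[ℂ] H) (T' : ↥dT' →ₗ[ℂ] H)
    (Γ1 : ↥dT →ₗ[ℂ] 𝓗) (Γ2 : ↥dT →ₗ[ℂ] 𝓚)
    (Γt1 : ↥dT' →ₗ[ℂ] 𝓚) (Γt2 : ↥dT' →ₗ[ℂ] 𝓗)
    (green : ∀ (u : ↥dT) (v : ↥dT'),
      ⟪(v : H), T u⟫_ℂ - ⟪T' v, (u : H)⟫_ℂ
        = ⟪Γt2 v, Γ1 u⟫_ℂ - ⟪Γt1 v, Γ2 u⟫_ℂ)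
    (B C : 𝓚 →L[ℂ] 𝓗) (lam : ℂ)
    (RB : H →L[ℂ] H) (hRB : IsResolventAt dT T Γ1 Γ2 B lam RB)
    (RC : H →L[ℂ] H) (hRC : IsResolventAt dT T Γ1 Γ2 C lam RC)
    (RtC : H →L[ℂ] H)
    (hmem : ∀ y : H, RtC y ∈ dT')
    (hinv : ∀ y : H, T' ⟨RtC y, hmem y⟩ - (starRingEnd ℂ lam) • RtC y = y)
    (hbc : ∀ y : H, Γt1 ⟨RtC y, hmem y⟩
      = (ContinuousLinearMap.adjoint C) (Γt2 ⟨RtC y, hmem y⟩))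
    (hadj : ∀ x y : H, ⟪y, RC x⟫_ℂ = ⟪RtC y, x⟫_ℂ)
    (SC : 𝓗 →ₗ[ℂ] ↥dT) (hSC : IsSolOp dT T Γ1 Γ2 C lam SC)
    (Sbar Stbar : Set H)
    (hdense1 : Dense ((Submodule.span ℂ
      ((fun h : H => Γ2 ⟨RC h, hRC.mem h⟩) '' Sbar) : Submodule ℂ 𝓚) : Set 𝓚))
    (hdense2 : Dense ((Submodule.span ℂ
      ((fun h : H => Γt2 ⟨RtC h, hmem h⟩) '' Stbar) : Submodule ℂ 𝓗) : Set 𝓗))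
    (hBCrange : DenseRange ⇑(B - C))
    (hBCker : LinearMap.ker ((B - C : 𝓚 →L[ℂ] 𝓗) : 𝓚 →ₗ[ℂ] 𝓗) = ⊥)
    (N₁ N₂ : 𝓗 →L[ℂ] 𝓚)
    (heq : ∀ h ∈ Sbar, ∀ ht ∈ Stbar,
      ⟪ht, ((SC ((B - C) (Γ2 ⟨RC h, hRC.mem h⟩)
            + (B - C) (N₁ ((B - C) (Γ2 ⟨RC h, hRC.mem h⟩)))) : H))⟫_ℂ
        = ⟪ht, ((SC ((B - C) (Γ2 ⟨RC h, hRC.mem h⟩)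
            + (B - C) (N₂ ((B - C) (Γ2 ⟨RC h, hRC.mem h⟩)))) : H))⟫_ℂ) :
    N₁ = N₂ :=
  statement_12_general dT dT' T T' Γ1 Γ2 Γt1 Γt2 green B C lam RC hRC RtC hmem hinv hbc SC hSC Sbar
    Stbar hdense1 hdense2 hBCrange hBCker N₁ N₂ heq
end
end

section
/- Let p, q ∈ ℂ. The quadratic equation λ² + pλ + q = 0 has a real root (i.e., there exists t ∈ ℝ with t² + pt + q = 0) if and only if both (Im q)² = (Im p)·(Re p · Im q − Re q · Im p) and 4·Re q ≤ |p|². -/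
/-!
Splitting `t² + p t + q = 0` for real `t` into real and imaginary parts gives the system
`t² + (Re p) t + Re q = 0`, `(Im p) t + Im q = 0`. If `Im p ≠ 0` the second equation forces
`t = -Im q / Im p`, and substituting into the first gives the identity between `Im q` and `Im p`;
the inequality then holds automatically. If `Im p = 0` the identity says `Im q = 0`, and the
inequality is the discriminant condition of the real quadratic.
-/

namespace Real

lemma exists_sq_add_mul_add_eq_zero_iff {b c : ℝ} :
    (∃ t : ℝ, t ^ 2 + b * t + c = 0) ↔ 4 * c ≤ b ^ 2 := by
  constructor
  · rintro ⟨t, ht⟩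
    nlinarith [sq_nonneg (2 * t + b)]
  · intro h
    obtain ⟨t, ht⟩ := exists_quadratic_eq_zero one_ne_zero
      ⟨√(discrim 1 b c), (mul_self_sqrt (by rw [discrim]; linarith)).symm⟩
    exact ⟨t, by linear_combination ht⟩

lemma exists_common_root_iff_of_ne_zero {a b c d : ℝ} (ha : a ≠ 0) :
    (∃ t : ℝ, t ^ 2 + b * t + c = 0 ∧ a * t + d = 0) ↔ d ^ 2 = a * (b * d - c * a) := by
  constructor
  · rintro ⟨t, hquad, hlin⟩
    linear_combination a ^ 2 * hquad + (d - a * t - a * b) * hlin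
  · intro h
    refine ⟨-d / a, ?_, ?_⟩
    · field_simp
      linear_combination h
    · field_simp
      ring

lemma exists_common_root_iff {a b c d : ℝ} :
    (∃ t : ℝ, t ^ 2 + b * t + c = 0 ∧ a * t + d = 0) ↔
      d ^ 2 = a * (b * d - c * a) ∧ 4 * c ≤ b ^ 2 + a ^ 2 := by
  rcases eq_or_ne a 0 with rfl | ha
  · simp [exists_sq_add_mul_add_eq_zero_iff, and_comm]
  · rw [← exists_common_root_iff_of_ne_zero ha, iff_self_and]
    rintro ⟨t, hquad, -⟩
    linarith [exists_sq_add_mul_add_eq_zero_iff.mp ⟨t, hquad⟩, sq_nonneg a]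

end Real

lemma Complex.ofReal_sq_add_mul_add_eq_zero_iff (p q : ℂ) (t : ℝ) :
    (t : ℂ) ^ 2 + p * t + q = 0 ↔ t ^ 2 + p.re * t + q.re = 0 ∧ p.im * t + q.im = 0 := by
  simp [Complex.ext_iff, pow_two]

/-- `λ² + pλ + q = 0` has a real root iff
`(Im q)² = Im p · (Re p · Im q − Re q · Im p)` and `4 Re q ≤ |p|²`. -/
theorem statement_14 (p q : ℂ) :
    (∃ t : ℝ, (t : ℂ) ^ 2 + p * t + q = 0) ↔
      (q.im ^ 2 = p.im * (p.re * q.im - q.re * p.im)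
        ∧ 4 * q.re ≤ ‖p‖ ^ 2) := by
  have hnorm : ‖p‖ ^ 2 = p.re ^ 2 + p.im ^ 2 := by
    rw [Complex.sq_norm, Complex.normSq_apply]
    ring
  simp_rw [Complex.ofReal_sq_add_mul_add_eq_zero_iff, hnorm]
  exact Real.exists_common_root_iff
end

section
/- In the Friedrichs model, the domain D(A) is dense in L²(ℝ); for every f in the set D* := {f ∈ L²(ℝ) : ∃ c ∈ ℂ with x ↦ x f(x) − c in L²(ℝ)}, the constant c is unique (denoted c_f); and the Hilbert-space adjoint A* of A has domain exactly D*, acting by (A* f)(x) = x f(x) − c_f + (∫_ℝ f ψ̄)·φ(x). -/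
open MeasureTheory Filter Topology
open scoped InnerProductSpace

noncomputable section

/-- The space `L²(ℝ)` (complex valued). -/
abbrev L2 := Lp ℂ 2 (volume : Measure ℝ)

/-- Membership in the domain of the minimal Friedrichs-model operator `A`:
`x f(x) ∈ L²` and `lim_{R→∞} ∫_{-R}^R f = 0`. -/
abbrev inDomA (f : L2) : Prop :=
  MemLp (fun x : ℝ => (x : ℂ) * f x) 2 volume ∧
    Tendsto (fun R : ℝ => ∫ x in Set.Ioc (-R) R, f x) atTop (nhds 0)

/-- Membership in the domain of the maximal operator(s): there is a constant `c`
(the trace `Γ₂ f = c_f`) with `x f(x) − c ∈ L²`. -/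
abbrev inDomAstar (f : L2) (c : ℂ) : Prop :=
  MemLp (fun x : ℝ => (x : ℂ) * f x - c) 2 volume

/-- The minimal operator `A`: `(A f)(x) = x f(x) + ⟨f, φ⟩ ψ(x)`
(paper inner product `⟨f, φ⟩ = ⟪φ, f⟫` in Mathlib's convention). -/
def Aop (φ ψ f : L2) (hf : inDomA f) : L2 :=
  MemLp.toLp (fun x : ℝ => (x : ℂ) * f x) hf.1 + ⟪φ, f⟫_ℂ • ψ

/-- The adjoint expression `A*`: `(A* f)(x) = x f(x) − c_f + ⟨f, ψ⟩ φ(x)`. -/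
def AstarOp (φ ψ f : L2) (c : ℂ) (h : inDomAstar f c) : L2 :=
  MemLp.toLp (fun x : ℝ => (x : ℂ) * f x - c) h + ⟪ψ, f⟫_ℂ • φ

/-- The expression `Ã*`: `(Ã* f)(x) = x f(x) − c_f + ⟨f, φ⟩ ψ(x)`. -/
def AtildeStarOp (φ ψ f : L2) (c : ℂ) (h : inDomAstar f c) : L2 :=
  MemLp.toLp (fun x : ℝ => (x : ℂ) * f x - c) h + ⟪φ, f⟫_ℂ • ψ

/-- The operator `Ã`: `(Ã f)(x) = x f(x) + ⟨f, ψ⟩ φ(x)` on `D(A)`. -/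
def AtildeOp (φ ψ f : L2) (hf : inDomA f) : L2 :=
  MemLp.toLp (fun x : ℝ => (x : ℂ) * f x) hf.1 + ⟪ψ, f⟫_ℂ • φ

/-!
For `g` with `x g - c ∈ L²` and `f ∈ D(A)`, the integrands of `⟨x f, g⟩` and `⟨f, x g - c⟩`
differ by `c̄ f`, whose truncated integrals `∫_{-R}^{R} f` tend to `0`; hence
`⟨A f, g⟩ = ⟨f, A* g⟩`. Conversely, the step functions `1_{(a,b]} - (b - a) 1_{(0,1]}` lie in
`D(A)`; if `⟨A f, g⟩ = ⟨f, h⟩` on `D(A)`, testing against them shows that `x g - h + ⟨g, ψ⟩ φ`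
has the same mean over every interval, so it is a.e. constant by Lebesgue differentiation.
The same test functions show that `D(A)ᗮ` consists of constants lying in `L²(ℝ)`, i.e. is `0`:
so `D(A)` is dense, and this makes `h` unique.
-/

open Set ComplexConjugate
open scoped ENNReal

lemma eq_zero_of_memLp_const {E : Type*} [NormedAddCommGroup E] {p : ℝ≥0∞} (hp₀ : p ≠ 0)
    (hp : p ≠ ∞) {c : E} (h : MemLp (fun _ : ℝ => c) p volume) : c = 0 := by
  simpa [Real.volume_univ] using (memLp_const_iff hp₀ hp).1 h

lemma inDomAstar_unique {f : L2} {c c' : ℂ} (h : inDomAstar f c) (h' : inDomAstar f c') :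
    c = c' := by
  have hconst : MemLp (fun _ : ℝ => c - c') 2 volume := by
    convert h'.sub h using 1
    ext x
    simp
  exact sub_eq_zero.1 (eq_zero_of_memLp_const two_ne_zero ENNReal.ofNat_ne_top hconst)

lemma integrable_conj_mul {u v : ℝ → ℂ} (hu : MemLp u 2 volume) (hv : MemLp v 2 volume) :
    Integrable (fun x => conj (u x) * v x) volume :=
  hu.star.integrable_mul hv

lemma L2.inner_eq_integral (u v : L2) : ⟪u, v⟫_ℂ = ∫ x, conj (u x) * v x := by
  simp only [L2.inner_def, RCLike.inner_apply, mul_comm]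

lemma inner_toLp_left {w : ℝ → ℂ} (hw : MemLp w 2 volume) (f : L2) :
    ⟪hw.toLp w, f⟫_ℂ = ∫ x, conj (w x) * f x := by
  rw [L2.inner_eq_integral]
  refine integral_congr_ae ?_
  filter_upwards [hw.coeFn_toLp] with x hx
  rw [hx]

lemma inner_toLp_right (g : L2) {w : ℝ → ℂ} (hw : MemLp w 2 volume) :
    ⟪g, hw.toLp w⟫_ℂ = ∫ x, conj (g x) * w x := by
  rw [L2.inner_eq_integral]
  refine integral_congr_ae ?_
  filter_upwards [hw.coeFn_toLp] with x hx
  rw [hx]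

lemma tendsto_setIntegral_Ioc_neg_self {E : Type*} [NormedAddCommGroup E] [NormedSpace ℝ E]
    {F : ℝ → E} (hF : Integrable F volume) :
    Tendsto (fun R : ℝ => ∫ x in Ioc (-R) R, F x) atTop (𝓝 (∫ x, F x)) := by
  refine (intervalIntegral_tendsto_integral hF tendsto_neg_atTop_atBot tendsto_id).congr' ?_
  filter_upwards [eventually_ge_atTop 0] with R hR
  rw [id, intervalIntegral.integral_of_le (by linarith)]

lemma inner_toLp_mul_eq_inner_toLp_mul_sub {f g : L2} {c : ℂ} (hg : inDomAstar g c)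
    (hf : inDomA f) : ⟪g, hf.1.toLp _⟫_ℂ = ⟪hg.toLp _, f⟫_ℂ := by
  rw [inner_toLp_right, inner_toLp_left, ← sub_eq_zero, ← integral_sub
    (integrable_conj_mul (Lp.memLp g) hf.1) (integrable_conj_mul hg (Lp.memLp f))]
  refine tendsto_nhds_unique (tendsto_setIntegral_Ioc_neg_self ((integrable_conj_mul
    (Lp.memLp g) hf.1).sub (integrable_conj_mul hg (Lp.memLp f)))) ?_
  have hlim := hf.2.const_mul (conj c)
  rw [mul_zero] at hlim
  refine hlim.congr fun R => ?_
  rw [← integral_const_mul]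
  refine integral_congr_ae (ae_of_all _ fun x => ?_)
  simp only [map_mul, map_sub, Complex.conj_ofReal]
  ring

lemma inner_Aop_eq_inner_AstarOp (φ ψ : L2) {f g : L2} {c : ℂ} (hg : inDomAstar g c)
    (hf : inDomA f) : ⟪g, Aop φ ψ f hf⟫_ℂ = ⟪AstarOp φ ψ g c hg, f⟫_ℂ := by
  rw [Aop, AstarOp, inner_add_right, inner_smul_right, inner_add_left, inner_smul_left,
    inner_conj_symm, inner_toLp_mul_eq_inner_toLp_mul_sub hg hf, mul_comm]

lemma ae_eq_const_of_setIntegral_Ioc_eq {E : Type*} [NormedAddCommGroup E] [NormedSpace ℝ E]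
    [CompleteSpace E] {u : ℝ → E} (hu : LocallyIntegrable u volume) (k : E)
    (H : ∀ a b : ℝ, a < b → ∫ x in Ioc a b, u x = (b - a) • k) : u =ᵐ[volume] fun _ => k := by
  filter_upwards [IsUnifLocDoublingMeasure.ae_tendsto_average (μ := volume) hu 1] with x hx
  have hball : ∀ᶠ r in 𝓝[>] (0 : ℝ), x ∈ Metric.closedBall x (1 * r) := by
    filter_upwards [self_mem_nhdsWithin] with r hr
    exact Metric.mem_closedBall_self (by simpa using hr.le)
  have hav : ∀ᶠ r in 𝓝[>] (0 : ℝ), ⨍ y in Metric.closedBall x r, u y = k := by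
    filter_upwards [self_mem_nhdsWithin] with r (hr : 0 < r)
    rw [Real.closedBall_eq_Icc, setAverage_eq, Real.volume_real_Icc_of_le (by linarith),
      integral_Icc_eq_integral_Ioc, H _ _ (by linarith), smul_smul, inv_mul_cancel₀ (by linarith),
      one_smul]
  exact tendsto_nhds_unique (hx (fun _ => x) id tendsto_id hball)
    (tendsto_const_nhds.congr' (hav.mono fun _ h => h.symm))

def testFun (a b : ℝ) (x : ℝ) : ℂ :=
  (Ioc a b).indicator (fun _ => 1) x - (b - a) * (Ioc 0 1).indicator (fun _ => 1) x

lemma memLp_testFun (a b : ℝ) : MemLp (testFun a b) 2 volume :=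
  (memLp_indicator_const 2 measurableSet_Ioc 1 (Or.inr (by simp))).sub
    ((memLp_indicator_const 2 measurableSet_Ioc 1 (Or.inr (by simp))).const_mul _)

lemma conj_testFun (a b x : ℝ) : conj (testFun a b x) = testFun a b x := by
  simp only [testFun, indicator_apply]
  split_ifs <;> simp

lemma support_testFun_subset (a b : ℝ) :
    Function.support (testFun a b) ⊆ Icc (-(|a| + |b| + 1)) (|a| + |b| + 1) := by
  intro x hx
  by_contra hout
  have h₁ : x ∉ Ioc a b := fun h => hout
    ⟨by linarith [h.1, neg_abs_le a, abs_nonneg b], by linarith [h.2, le_abs_self b, abs_nonneg a]⟩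
  have h₂ : x ∉ Ioc (0 : ℝ) 1 := fun h => hout
    ⟨by linarith [h.1, abs_nonneg a, abs_nonneg b], by linarith [h.2, abs_nonneg a, abs_nonneg b]⟩
  simp [testFun, h₁, h₂] at hx

lemma integral_testFun_mul {a b : ℝ} {u : ℝ → ℂ} (hu : LocallyIntegrable u volume) :
    ∫ x, testFun a b x * u x = (∫ x in Ioc a b, u x) - (b - a) * ∫ x in Ioc 0 1, u x := by
  have hIoc : ∀ p q : ℝ, IntegrableOn u (Ioc p q) volume := fun p q =>
    (hu.integrableOn_isCompact isCompact_Icc).mono_set Ioc_subset_Icc_self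
  have hfun : (fun x => testFun a b x * u x) =
      fun x => (Ioc a b).indicator u x - (b - a) * (Ioc 0 1).indicator u x := by
    ext x
    simp only [testFun, indicator_apply]
    split_ifs <;> ring
  rw [hfun, integral_sub, integral_const_mul, integral_indicator measurableSet_Ioc,
    integral_indicator measurableSet_Ioc]
  · exact (integrable_indicator_iff measurableSet_Ioc).2 (hIoc a b)
  · exact ((integrable_indicator_iff measurableSet_Ioc).2 (hIoc 0 1)).const_mul _

lemma integral_testFun {a b : ℝ} (hab : a ≤ b) : ∫ x, testFun a b x = 0 := by
  simpa [Real.volume_real_Ioc_of_le hab] using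
    integral_testFun_mul (a := a) (b := b) (locallyIntegrable_const (1 : ℂ))

lemma inDomA_toLp_of_support_subset {v : ℝ → ℂ} (hv : MemLp v 2 volume) {N : ℝ}
    (hsupp : Function.support v ⊆ Icc (-N) N) (hint : ∫ x, v x = 0) : inDomA (hv.toLp v) := by
  constructor
  · refine (Lp.memLp (hv.toLp v)).of_le_mul (c := N)
      (Complex.continuous_ofReal.aestronglyMeasurable.mul (Lp.aestronglyMeasurable _)) ?_
    filter_upwards [hv.coeFn_toLp] with x hx
    rw [hx, norm_mul, Complex.norm_real, Real.norm_eq_abs]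
    by_cases hvx : v x = 0
    · simp [hvx]
    · exact mul_le_mul_of_nonneg_right (abs_le.2 (hsupp hvx)) (norm_nonneg _)
  · refine tendsto_const_nhds.congr' ?_
    filter_upwards [eventually_gt_atTop N] with R hR
    rw [integral_congr_ae (ae_restrict_of_ae hv.coeFn_toLp), ← hint]
    refine (setIntegral_eq_integral_of_forall_compl_eq_zero fun x hx => ?_).symm
    by_contra hvx
    exact hx ⟨by linarith [(hsupp hvx).1], by linarith [(hsupp hvx).2]⟩

def testVec (a b : ℝ) : L2 := (memLp_testFun a b).toLp (testFun a b)

lemma inDomA_testVec {a b : ℝ} (hab : a ≤ b) : inDomA (testVec a b) :=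
  inDomA_toLp_of_support_subset _ (support_testFun_subset a b) (integral_testFun hab)

lemma exists_ae_eq_const_of_inner_testVec {u : ℝ → ℂ} (hu : LocallyIntegrable u volume)
    (H : ∀ a b : ℝ, a < b → ∫ x, conj (testVec a b x) * u x = 0) :
    ∃ k : ℂ, u =ᵐ[volume] fun _ => k := by
  refine ⟨_, ae_eq_const_of_setIntegral_Ioc_eq hu (∫ x in Ioc 0 1, u x) fun a b hab => ?_⟩
  have h := H a b hab
  rw [integral_congr_ae ((memLp_testFun a b).coeFn_toLp.mono fun x hx => by
    rw [testVec, hx, conj_testFun]), integral_testFun_mul hu, sub_eq_zero] at h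
  rw [h, Complex.real_smul, Complex.ofReal_sub]

lemma integrableOn_Ioc_of_L2 (f : L2) (a b : ℝ) : IntegrableOn f (Ioc a b) volume :=
  ((Lp.memLp f).locallyIntegrable (by norm_num)).integrableOn_isCompact isCompact_Icc
    |>.mono_set Ioc_subset_Icc_self

def domA : Submodule ℂ L2 where
  carrier := {f | inDomA f}
  zero_mem' := ⟨by simp, by simp⟩
  add_mem' := by
    rintro f g ⟨hf, hf'⟩ ⟨hg, hg'⟩
    refine ⟨(hf.add hg).ae_eq ?_, ?_⟩
    · filter_upwards [Lp.coeFn_add f g] with x hx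
      simp only [hx, Pi.add_apply, mul_add]
    · have hlim := hf'.add hg'
      rw [add_zero] at hlim
      refine hlim.congr fun R => ?_
      rw [integral_congr_ae (ae_restrict_of_ae (Lp.coeFn_add f g)),
        ← integral_add (integrableOn_Ioc_of_L2 f _ _) (integrableOn_Ioc_of_L2 g _ _)]
      rfl
  smul_mem' := by
    rintro a f ⟨hf, hf'⟩
    refine ⟨(hf.const_mul a).ae_eq ?_, ?_⟩
    · filter_upwards [Lp.coeFn_smul a f] with x hx
      simp only [hx, Pi.smul_apply, smul_eq_mul]
      ring
    · have hlim := hf'.const_mul a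
      rw [mul_zero] at hlim
      refine hlim.congr fun R => ?_
      rw [integral_congr_ae (ae_restrict_of_ae (Lp.coeFn_smul a f)), ← integral_const_mul]
      rfl

lemma dense_domA : Dense {f : L2 | inDomA f} := by
  change Dense (domA : Set L2)
  rw [Submodule.dense_iff_topologicalClosure_eq_top, Submodule.topologicalClosure_eq_top_iff,
    Submodule.eq_bot_iff]
  intro w hw
  obtain ⟨k, hk⟩ := exists_ae_eq_const_of_inner_testVec
    ((Lp.memLp w).locallyIntegrable (by norm_num)) fun a b hab => by
      rw [← L2.inner_eq_integral]
      exact hw _ (inDomA_testVec hab.le)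
  have hk₀ : k = 0 :=
    eq_zero_of_memLp_const two_ne_zero ENNReal.ofNat_ne_top ((Lp.memLp w).ae_eq hk)
  exact Lp.eq_zero_iff_ae_eq_zero.2 (hk.trans (by rw [hk₀]; rfl))

lemma inner_toLp_mul_eq_of_forall_inner_Aop {φ ψ g h : L2}
    (H : ∀ (f : L2) (hf : inDomA f), ⟪g, Aop φ ψ f hf⟫_ℂ = ⟪h, f⟫_ℂ) {f : L2} (hf : inDomA f) :
    ⟪g, hf.1.toLp _⟫_ℂ = ⟪h - ⟪ψ, g⟫_ℂ • φ, f⟫_ℂ := by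
  rw [inner_sub_left, inner_smul_left, inner_conj_symm, ← H f hf, Aop, inner_add_right,
    inner_smul_right]
  ring

lemma exists_inDomAstar_of_forall_inner_Aop {φ ψ g h : L2}
    (H : ∀ (f : L2) (hf : inDomA f), ⟪g, Aop φ ψ f hf⟫_ℂ = ⟪h, f⟫_ℂ) : ∃ c, inDomAstar g c := by
  set h' := h - ⟪ψ, g⟫_ℂ • φ
  have hu : LocallyIntegrable (fun x : ℝ => (x : ℂ) * g x - h' x) volume :=
    (((Lp.memLp g).locallyIntegrable (by norm_num)).continuous_mul Complex.continuous_ofReal).sub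
      ((Lp.memLp h').locallyIntegrable (by norm_num))
  obtain ⟨k, hk⟩ := exists_ae_eq_const_of_inner_testVec hu fun a b hab => by
    have hf := inDomA_testVec hab.le
    have hfg := congrArg conj (inner_toLp_mul_eq_of_forall_inner_Aop H hf)
    rw [inner_conj_symm, inner_conj_symm, inner_toLp_left, L2.inner_eq_integral, ← sub_eq_zero,
      ← integral_sub (integrable_conj_mul hf.1 (Lp.memLp g))
        (integrable_conj_mul (Lp.memLp _) (Lp.memLp h'))] at hfg
    rw [← hfg]
    congr 1 with x
    simp only [map_mul, Complex.conj_ofReal]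
    ring
  refine ⟨k, (Lp.memLp h').ae_eq (hk.mono fun x hx => ?_)⟩
  linear_combination -hx

/-- In the Friedrichs model: `D(A)` is dense in `L²(ℝ)`; the constant
`c_f` is unique; and the Hilbert-space adjoint of `A` has domain exactly
`D* = {f : ∃ c, x f(x) − c ∈ L²}`, acting by `(A* f)(x) = x f(x) − c_f + ⟨f, ψ⟩ φ(x)`.
(The adjoint is expressed extensionally: `g ∈ D(A*)` iff there is `h ∈ L²` with
`⟨A f, g⟩ = ⟨f, h⟩` for all `f ∈ D(A)`, and then `h` is given by the stated formula;
paper inner products `⟨u, v⟩` are `⟪v, u⟫_ℂ` in Mathlib's convention.) -/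
theorem statement_15 (φ ψ : L2) :
    Dense {f : L2 | inDomA f}
    ∧ (∀ (f : L2) (c c' : ℂ), inDomAstar f c → inDomAstar f c' → c = c')
    ∧ (∀ g : L2,
        (∃ h : L2, ∀ (f : L2) (hf : inDomA f), ⟪g, Aop φ ψ f hf⟫_ℂ = ⟪h, f⟫_ℂ)
          ↔ ∃ c : ℂ, inDomAstar g c)
    ∧ (∀ (g : L2) (c : ℂ) (hc : inDomAstar g c) (h : L2),
        (∀ (f : L2) (hf : inDomA f), ⟪g, Aop φ ψ f hf⟫_ℂ = ⟪h, f⟫_ℂ)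
          → h = MemLp.toLp (fun x : ℝ => (x : ℂ) * g x - c) hc + ⟪ψ, g⟫_ℂ • φ) := by
  refine ⟨dense_domA, fun f c c' => inDomAstar_unique, fun g => ⟨?_, ?_⟩, ?_⟩
  · rintro ⟨h, H⟩
    exact exists_inDomAstar_of_forall_inner_Aop H
  · rintro ⟨c, hc⟩
    exact ⟨AstarOp φ ψ g c hc, fun f hf => inner_Aop_eq_inner_AstarOp φ ψ hc hf⟩
  · intro g c hc h H
    exact dense_domA.eq_of_inner_left ℂ fun f hf =>
      (H f hf).symm.trans (inner_Aop_eq_inner_AstarOp φ ψ hc hf)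
end
end

section
/- In the Friedrichs model, for all f, g ∈ D(A*), the limits Γ₁ f = lim_{R→∞} ∫_{−R}^{R} f(x) dx and Γ₁ g = lim_{R→∞} ∫_{−R}^{R} g(x) dx exist, and with A* f = x f − c_f + ⟨f, ψ⟩φ and A* g = x g − c_g + ⟨g, ψ⟩φ one has the Green identity ⟨A* f, g⟩ − ⟨f, A* g⟩ = Γ₁ f · conj(Γ₂ g) − Γ₂ f · conj(Γ₁ g) + ⟨f, ψ⟩⟨φ, g⟩ − ⟨f, φ⟩⟨ψ, g⟩. -/
open MeasureTheory Filter Topology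
open scoped InnerProductSpace

noncomputable section

/-! For `f ∈ L²` with `x f(x) - c ∈ L²`, the identity
`f - c x/(1+x²) = (1+x²)⁻¹ f + x/(1+x²) · (x f - c)` exhibits `f - c x/(1+x²)` as a sum of products
of `L²` functions, hence integrable; the correction `c x/(1+x²)` is odd, so it does not change the
symmetric integrals `∫_{-R}^R f`, and `Γ₁ f` is the integral of `f - c x/(1+x²)` over `ℝ`.
Because `x/(1+x²)` is real, the integrand `(x f - c_f) ḡ - f (x g - c_g)‾` of
`⟨x f - c_f, g⟩ - ⟨f, x g - c_g⟩` is `c̄_g (f - c_f x/(1+x²)) - c_f (g - c_g x/(1+x²))‾`, whose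
integral is `Γ₁f · c̄_g - c_f · Γ₁g‾`; the rank-one perturbations give the remaining terms. -/

open ComplexConjugate

lemma memLp_two_of_norm_sq_le_inv_one_add_sq {w : ℝ → ℂ} (hw : AEStronglyMeasurable w)
    (hle : ∀ x, ‖w x‖ ^ 2 ≤ (1 + x ^ 2)⁻¹) : MemLp w 2 volume :=
  (memLp_two_iff_integrable_sq_norm hw).2 <|
    integrable_inv_one_add_sq.mono' (hw.norm.pow 2) (ae_of_all _ fun x => by
      simpa only [Real.norm_eq_abs, abs_pow, abs_norm] using hle x)

lemma memLp_two_inv_one_add_sq : MemLp (fun x : ℝ => ((1 + x ^ 2 : ℝ) : ℂ)⁻¹) 2 volume := by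
  refine memLp_two_of_norm_sq_le_inv_one_add_sq
    (by fun_prop : Measurable _).aestronglyMeasurable fun x => ?_
  rw [norm_inv, Complex.norm_real, Real.norm_of_nonneg (by positivity), inv_pow]
  exact inv_anti₀ (by positivity) (le_self_pow₀ (by nlinarith) two_ne_zero)

lemma memLp_two_div_one_add_sq : MemLp (fun x : ℝ => ((x / (1 + x ^ 2) : ℝ) : ℂ)) 2 volume := by
  refine memLp_two_of_norm_sq_le_inv_one_add_sq
    (by fun_prop : Measurable _).aestronglyMeasurable fun x => ?_
  rw [Complex.norm_real, Real.norm_eq_abs, sq_abs, div_pow, div_le_iff₀ (by positivity)]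
  field_simp
  nlinarith

lemma integrable_sub_mul_div_one_add_sq {f : ℝ → ℂ} {c : ℂ} (hf : MemLp f 2 volume)
    (hu : MemLp (fun x : ℝ => (x : ℂ) * f x - c) 2 volume) :
    Integrable (fun x : ℝ => f x - c * ((x / (1 + x ^ 2) : ℝ) : ℂ)) volume := by
  refine ((memLp_two_inv_one_add_sq.integrable_mul hf).add
    (memLp_two_div_one_add_sq.integrable_mul hu)).congr (ae_of_all _ fun x => ?_)
  have hpos : ((1 + x ^ 2 : ℝ) : ℂ) ≠ 0 := by exact_mod_cast (by positivity : (1 + x ^ 2 : ℝ) ≠ 0)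
  simp only [Pi.add_apply, Pi.mul_apply]
  push_cast at hpos ⊢
  field_simp
  ring

lemma intervalIntegral_neg_self_eq_zero_of_odd {E : Type*} [NormedAddCommGroup E]
    [NormedSpace ℝ E] {k : ℝ → E} (hk : ∀ x, k (-x) = -k x) (R : ℝ) :
    ∫ x in -R..R, k x = 0 := by
  have h := intervalIntegral.integral_comp_neg (a := -R) (b := R) k
  simp only [hk, intervalIntegral.integral_neg, neg_neg] at h
  have h2 : (2 : ℝ) • ∫ x in -R..R, k x = 0 := by
    rw [two_smul]; nth_rewrite 1 [← h]; exact neg_add_cancel _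
  exact (smul_eq_zero.1 h2).resolve_left two_ne_zero

lemma tendsto_intervalIntegral_neg_self {E : Type*} [NormedAddCommGroup E] [NormedSpace ℝ E]
    {h : ℝ → E} (hh : Integrable h volume) :
    Tendsto (fun R : ℝ => ∫ x in -R..R, h x) atTop (𝓝 (∫ x, h x)) :=
  intervalIntegral_tendsto_integral hh tendsto_neg_atTop_atBot tendsto_id

def gammaOne (f : ℝ → ℂ) (c : ℂ) : ℂ :=
  ∫ x, f x - c * ((x / (1 + x ^ 2) : ℝ) : ℂ)

lemma tendsto_setIntegral_Ioc_gammaOne {f : ℝ → ℂ} {c : ℂ} (hf : MemLp f 2 volume)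
    (hu : MemLp (fun x : ℝ => (x : ℂ) * f x - c) 2 volume) :
    Tendsto (fun R : ℝ => ∫ x in Set.Ioc (-R) R, f x) atTop (𝓝 (gammaOne f c)) := by
  set k : ℝ → ℂ := fun x => ((x / (1 + x ^ 2) : ℝ) : ℂ)
  have hk_odd : ∀ x, k (-x) = -k x := fun x => by simp [k, neg_div]
  refine (tendsto_intervalIntegral_neg_self (integrable_sub_mul_div_one_add_sq hf hu)).congr' ?_
  filter_upwards [eventually_ge_atTop 0] with R hR
  have hRR : -R ≤ R := by linarith
  have hfR : IntervalIntegrable f volume (-R) R :=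
    (intervalIntegrable_iff_integrableOn_Ioc_of_le hRR).2 <|
      (hf.restrict _).integrable one_le_two
  have hkR : IntervalIntegrable k volume (-R) R :=
    (Complex.continuous_ofReal.comp <| continuous_id.div (by fun_prop) fun x => by
      positivity).intervalIntegrable _ _
  rw [intervalIntegral.integral_sub hfR (hkR.const_mul c), intervalIntegral.integral_const_mul,
    intervalIntegral_neg_self_eq_zero_of_odd hk_odd, mul_zero, sub_zero,
    intervalIntegral.integral_of_le hRR]

lemma integral_mul_conj_sub_mul_conj_eq_gammaOne {f g : ℝ → ℂ} {cf cg : ℂ}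
    (hf : MemLp f 2 volume) (huf : MemLp (fun x : ℝ => (x : ℂ) * f x - cf) 2 volume)
    (hg : MemLp g 2 volume) (hug : MemLp (fun x : ℝ => (x : ℂ) * g x - cg) 2 volume) :
    ∫ x : ℝ, (((x : ℂ) * f x - cf) * conj (g x) - f x * conj ((x : ℂ) * g x - cg))
      = gammaOne f cf * conj cg - cf * conj (gammaOne g cg) := by
  have hpt : ∀ x : ℝ, ((x : ℂ) * f x - cf) * conj (g x) - f x * conj ((x : ℂ) * g x - cg)
      = conj cg * (f x - cf * ((x / (1 + x ^ 2) : ℝ) : ℂ))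
        - cf * conj (g x - cg * ((x / (1 + x ^ 2) : ℝ) : ℂ)) := fun x => by
    simp only [map_sub, map_mul, Complex.conj_ofReal]
    ring
  have hg_conj : Integrable (fun x : ℝ => conj (g x - cg * ((x / (1 + x ^ 2) : ℝ) : ℂ))) :=
    Complex.conjCLE.toContinuousLinearMap.integrable_comp (integrable_sub_mul_div_one_add_sq hg hug)
  rw [integral_congr_ae (ae_of_all _ hpt),
    integral_sub ((integrable_sub_mul_div_one_add_sq hf huf).const_mul _) (hg_conj.const_mul _),
    integral_const_mul, integral_const_mul, integral_conj, gammaOne, gammaOne]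
  ring

lemma inner_sub_inner_toLp_eq_gammaOne (f g : L2) {cf cg : ℂ}
    (hf : MemLp (fun x : ℝ => (x : ℂ) * f x - cf) 2 volume)
    (hg : MemLp (fun x : ℝ => (x : ℂ) * g x - cg) 2 volume) :
    ⟪g, hf.toLp _⟫_ℂ - ⟪hg.toLp _, f⟫_ℂ
      = gammaOne f cf * conj cg - cf * conj (gammaOne g cg) := by
  rw [L2.inner_def, L2.inner_def, ← integral_sub (L2.integrable_inner _ _)
    (L2.integrable_inner _ _), ← integral_mul_conj_sub_mul_conj_eq_gammaOne (Lp.memLp f) hf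
    (Lp.memLp g) hg]
  refine integral_congr_ae ?_
  filter_upwards [hf.coeFn_toLp, hg.coeFn_toLp] with x hfx hgx
  simp only [RCLike.inner_apply, hfx, hgx]

/-- Green's identity for the Friedrichs model: for `f, g ∈ D(A*)`
the limits `Γ₁ f`, `Γ₁ g` exist and
`⟨A*f, g⟩ − ⟨f, A*g⟩ = Γ₁f·conj(Γ₂g) − Γ₂f·conj(Γ₁g) + ⟨f,ψ⟩⟨φ,g⟩ − ⟨f,φ⟩⟨ψ,g⟩`. -/
theorem statement_16 (φ ψ : L2) (f g : L2) (cf cg : ℂ)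
    (hf : inDomAstar f cf) (hg : inDomAstar g cg) :
    ∃ Γ1f Γ1g : ℂ,
      Tendsto (fun R : ℝ => ∫ x in Set.Ioc (-R) R, f x) atTop (nhds Γ1f) ∧
      Tendsto (fun R : ℝ => ∫ x in Set.Ioc (-R) R, g x) atTop (nhds Γ1g) ∧
      ⟪g, AstarOp φ ψ f cf hf⟫_ℂ - ⟪AstarOp φ ψ g cg hg, f⟫_ℂ
        = Γ1f * (starRingEnd ℂ) cg - cf * (starRingEnd ℂ) Γ1g
          + ⟪ψ, f⟫_ℂ * ⟪g, φ⟫_ℂ - ⟪φ, f⟫_ℂ * ⟪g, ψ⟫_ℂ := by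
  refine ⟨gammaOne f cf, gammaOne g cg, tendsto_setIntegral_Ioc_gammaOne (Lp.memLp f) hf,
    tendsto_setIntegral_Ioc_gammaOne (Lp.memLp g) hg, ?_⟩
  have hgreen := inner_sub_inner_toLp_eq_gammaOne f g hf hg
  rw [AstarOp, AstarOp, inner_add_right, inner_add_left, inner_smul_right, inner_smul_left,
    inner_conj_symm]
  linear_combination hgreen
end
end

section
/- In the Friedrichs model, let λ ∈ ℂ with Im λ ≠ 0 and suppose D(λ) := 1 + ∫_ℝ ψ(x)·conj(φ(x))/(x − λ) dx ≠ 0, and set Φ(λ) := ∫_ℝ conj(φ(t))/(t − λ) dt. Then an element f ∈ D(A*) satisfies Ã* f = λ f if and only if there is c ∈ ℂ (necessarily c = c_f) such that f(x) = c·[1/(x−λ) − (Φ(λ)/D(λ))·ψ(x)/(x−λ)] for almost every x ∈ ℝ. In particular, ker(Ã* − λ) is the one-dimensional subspace spanned by the function x ↦ 1/(x−λ) − (Φ(λ)/D(λ))·ψ(x)/(x−λ). -/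
/-!
Rewriting `Ã* f = λ f` pointwise gives `(x - λ) f(x) = c - k ψ(x)` with `k = ⟨f, φ⟩`, so `f` is
`(c - k ψ) / (x - λ)`. Pairing this formula with `φ` yields the consistency condition
`k = c Φ(λ) - k (D(λ) - 1)`, i.e. `k D(λ) = c Φ(λ)`, which pins down `k = c Φ(λ) / D(λ)`; conversely
every such function is in `D(A*)` with constant `c`, because `x f(x) - c = λ f(x) - k ψ(x)`.
The spanning function is nonzero since `1 - (Φ/D) ψ` cannot vanish a.e. for `ψ ∈ L²(ℝ)`.
-/

open MeasureTheory Filter Topology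
open scoped InnerProductSpace

noncomputable section

section Resolvent

variable {lam : ℂ}

lemma ofReal_sub_ne_zero_of_im_ne_zero (hlam : lam.im ≠ 0) (x : ℝ) : (x : ℂ) - lam ≠ 0 :=
  fun h => hlam (by simpa using (congrArg Complex.im h).symm)

lemma norm_inv_ofReal_sub_le (hlam : lam.im ≠ 0) (x : ℝ) :
    ‖((x : ℂ) - lam)⁻¹‖ ≤ |lam.im|⁻¹ := by
  rw [norm_inv]
  refine inv_anti₀ (abs_pos.mpr hlam) ?_
  simpa using Complex.abs_im_le_norm ((x : ℂ) - lam)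

lemma continuous_inv_ofReal_sub (hlam : lam.im ≠ 0) :
    Continuous fun x : ℝ => ((x : ℂ) - lam)⁻¹ :=
  (Complex.continuous_ofReal.sub continuous_const).inv₀ (ofReal_sub_ne_zero_of_im_ne_zero hlam)

lemma memLp_two_inv_ofReal_sub (hlam : lam.im ≠ 0) :
    MemLp (fun x : ℝ => ((x : ℂ) - lam)⁻¹) 2 volume := by
  rw [memLp_two_iff_integrable_sq_norm (continuous_inv_ofReal_sub hlam).aestronglyMeasurable]
  have hCauchy : Integrable (fun x : ℝ => (1 + ((x - lam.re) / lam.im) ^ 2)⁻¹) :=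
    (integrable_inv_one_add_sq.comp_div hlam).comp_sub_right lam.re
  refine (hCauchy.const_mul (lam.im ^ 2)⁻¹).congr (.of_forall fun x => ?_)
  dsimp only
  rw [norm_inv, inv_pow, Complex.sq_norm, Complex.normSq_apply]
  simp only [Complex.sub_re, Complex.ofReal_re, Complex.sub_im, Complex.ofReal_im]
  field_simp
  ring

lemma MemLp.div_ofReal_sub (hlam : lam.im ≠ 0) {u : ℝ → ℂ} (hu : MemLp u 2 volume) :
    MemLp (fun x : ℝ => u x / ((x : ℂ) - lam)) 2 volume := by
  have hbdd : MemLp (fun x : ℝ => ((x : ℂ) - lam)⁻¹) ⊤ volume :=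
    memLp_top_of_bound (continuous_inv_ofReal_sub hlam).aestronglyMeasurable _
      (.of_forall (norm_inv_ofReal_sub_le hlam))
  simpa only [div_eq_mul_inv] using hbdd.mul' hu

lemma L2.inner_eq_integral_conj_mul (φ f : L2) :
    ⟪φ, f⟫_ℂ = ∫ x, starRingEnd ℂ (φ x) * f x := by
  simp only [L2.inner_def, RCLike.inner_apply, mul_comm]

lemma inner_eq_of_ae_eq_div (hlam : lam.im ≠ 0) (φ ψ f : L2) {c k : ℂ}
    (hf : ⇑f =ᵐ[volume] fun x : ℝ => (c - k * ψ x) / ((x : ℂ) - lam)) :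
    ⟪φ, f⟫_ℂ = c * (∫ t : ℝ, starRingEnd ℂ (φ t) / ((t : ℂ) - lam))
      - k * ∫ x : ℝ, ψ x * starRingEnd ℂ (φ x) / ((x : ℂ) - lam) := by
  have hφ : MemLp (fun x => starRingEnd ℂ (φ x)) 2 volume := (Lp.memLp φ).star
  have hΦ : Integrable (fun t : ℝ => starRingEnd ℂ (φ t) / ((t : ℂ) - lam)) := by
    simpa only [div_eq_mul_inv, Pi.mul_def] using hφ.integrable_mul (memLp_two_inv_ofReal_sub hlam)
  have hD : Integrable (fun x : ℝ => ψ x * starRingEnd ℂ (φ x) / ((x : ℂ) - lam)) := by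
    simpa only [div_mul_eq_mul_div, Pi.mul_def] using
      (MemLp.div_ofReal_sub hlam (Lp.memLp ψ)).integrable_mul hφ
  rw [L2.inner_eq_integral_conj_mul, ← integral_const_mul, ← integral_const_mul,
    ← integral_sub (hΦ.const_mul c) (hD.const_mul k)]
  refine integral_congr_ae (hf.mono fun x hx => ?_)
  simp only [hx]
  ring

lemma coeFn_atildeStarOp (φ ψ f : L2) (c : ℂ) (h : inDomAstar f c) :
    ⇑(AtildeStarOp φ ψ f c h) =ᵐ[volume] fun x : ℝ => (x : ℂ) * f x - c + ⟪φ, f⟫_ℂ * ψ x := by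
  filter_upwards [Lp.coeFn_add (h.toLp _) (⟪φ, f⟫_ℂ • ψ), h.coeFn_toLp,
    Lp.coeFn_smul ⟪φ, f⟫_ℂ ψ] with x hadd htoLp hsmul
  rw [AtildeStarOp, hadd, Pi.add_apply, htoLp, hsmul]
  rfl

lemma atildeStarOp_eq_smul_iff (hlam : lam.im ≠ 0) (φ ψ f : L2) (c : ℂ) (h : inDomAstar f c) :
    AtildeStarOp φ ψ f c h = lam • f ↔
      ⇑f =ᵐ[volume] fun x : ℝ => (c - ⟪φ, f⟫_ℂ * ψ x) / ((x : ℂ) - lam) := by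
  rw [Lp.ext_iff]
  constructor
  · intro heq
    filter_upwards [coeFn_atildeStarOp φ ψ f c h, heq, Lp.coeFn_smul lam f] with x hA heqx hsmul
    rw [hA, hsmul, Pi.smul_apply, smul_eq_mul] at heqx
    rw [eq_div_iff (ofReal_sub_ne_zero_of_im_ne_zero hlam x)]
    linear_combination heqx
  · intro hf
    filter_upwards [coeFn_atildeStarOp φ ψ f c h, hf, Lp.coeFn_smul lam f] with x hA hfx hsmul
    have hx := ofReal_sub_ne_zero_of_im_ne_zero hlam x
    rw [hA, hsmul, Pi.smul_apply, smul_eq_mul, hfx]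
    field_simp
    ring

lemma inDomAstar_of_ae_eq_div (hlam : lam.im ≠ 0) (ψ f : L2) {c k : ℂ}
    (hf : ⇑f =ᵐ[volume] fun x : ℝ => (c - k * ψ x) / ((x : ℂ) - lam)) : inDomAstar f c := by
  have hmem : MemLp (fun x : ℝ => lam * f x - k * ψ x) 2 volume :=
    ((Lp.memLp f).const_mul lam).sub ((Lp.memLp ψ).const_mul k)
  refine hmem.ae_eq (hf.mono fun x hfx => ?_)
  have hx := ofReal_sub_ne_zero_of_im_ne_zero hlam x
  simp only [hfx]
  field_simp
  ring

lemma not_ae_const_mul_eq_one (u : L2) (a : ℂ) : ¬ ∀ᵐ x ∂volume, a * u x = 1 := by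
  intro h
  obtain ⟨x, hx⟩ := h.exists
  have hu : ⇑u =ᵐ[volume] fun _ => a⁻¹ := h.mono fun _ => eq_inv_of_mul_eq_one_right
  have hconst := (Lp.memLp u).ae_eq hu
  rw [memLp_const_iff two_ne_zero ENNReal.ofNat_ne_top, Real.volume_univ] at hconst
  rcases hconst with ha | htop
  · exact left_ne_zero_of_mul_eq_one hx (inv_eq_zero.mp ha)
  · exact htop.ne rfl

lemma not_ae_eq_zero_inv_ofReal_sub_sub_mul_div (hlam : lam.im ≠ 0) (ψ : L2) (a : ℂ) :
    ¬ (fun x : ℝ => ((x : ℂ) - lam)⁻¹ - a * ψ x / ((x : ℂ) - lam)) =ᵐ[volume] 0 := by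
  refine fun hzero => not_ae_const_mul_eq_one ψ a (hzero.mono fun x hx => ?_)
  have hx0 := ofReal_sub_ne_zero_of_im_ne_zero hlam x
  simp only [Pi.zero_apply] at hx
  rw [inv_eq_one_div, ← sub_div, div_eq_zero_iff, sub_eq_zero] at hx
  exact (hx.resolve_right hx0).symm

lemma ae_eq_div_inner_iff (hlam : lam.im ≠ 0) (φ ψ f : L2) (c Dl Phi : ℂ)
    (hD : Dl = 1 + ∫ x : ℝ, ψ x * (starRingEnd ℂ) (φ x) / ((x : ℂ) - lam))
    (hPhi : Phi = ∫ t : ℝ, (starRingEnd ℂ) (φ t) / ((t : ℂ) - lam)) (hDne : Dl ≠ 0) :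
    (⇑f =ᵐ[volume] fun x : ℝ => (c - ⟪φ, f⟫_ℂ * ψ x) / ((x : ℂ) - lam)) ↔
      ⇑f =ᵐ[volume] fun x : ℝ => c * (((x : ℂ) - lam)⁻¹ - (Phi / Dl) * ψ x / ((x : ℂ) - lam)) := by
  have hconsistency : ∀ k : ℂ, (⇑f =ᵐ[volume] fun x : ℝ => (c - k * ψ x) / ((x : ℂ) - lam)) →
      ⟪φ, f⟫_ℂ = c * Phi - k * (Dl - 1) := fun k hf => by
    rw [inner_eq_of_ae_eq_div hlam φ ψ f hf, hD, hPhi]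
    ring
  have hform : (fun x : ℝ => (c - c * (Phi / Dl) * ψ x) / ((x : ℂ) - lam)) =
      fun x : ℝ => c * (((x : ℂ) - lam)⁻¹ - (Phi / Dl) * ψ x / ((x : ℂ) - lam)) := by
    funext x
    ring
  rw [← hform]
  constructor
  · intro hf
    have hk := hconsistency _ hf
    have hinner : ⟪φ, f⟫_ℂ = c * (Phi / Dl) := by
      field_simp
      linear_combination hk
    rwa [hinner] at hf
  · intro hf
    have hinner : ⟪φ, f⟫_ℂ = c * (Phi / Dl) := by
      rw [hconsistency _ hf]
      field_simp
      ring
    rwa [hinner]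

end Resolvent

/-- For nonreal `λ` with `D(λ) ≠ 0`, an element `f ∈ D(A*)` (with trace
constant `c`) satisfies `Ã* f = λ f` iff
`f(x) = c·[1/(x−λ) − (Φ(λ)/D(λ))·ψ(x)/(x−λ)]` a.e.; in particular `ker(Ã* − λ)` is the
one-dimensional subspace spanned by that function. -/
theorem statement_18 (φ ψ : L2) (lam : ℂ) (hlam : lam.im ≠ 0)
    (Dl Phi : ℂ)
    (hD : Dl = 1 + ∫ x : ℝ, ψ x * (starRingEnd ℂ) (φ x) / ((x : ℂ) - lam))
    (hPhi : Phi = ∫ t : ℝ, (starRingEnd ℂ) (φ t) / ((t : ℂ) - lam))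
    (hDne : Dl ≠ 0) :
    (∀ (f : L2) (c : ℂ) (h : inDomAstar f c),
      (AtildeStarOp φ ψ f c h = lam • f ↔
        ⇑f =ᵐ[volume] fun x : ℝ =>
          c * (((x : ℂ) - lam)⁻¹ - (Phi / Dl) * ψ x / ((x : ℂ) - lam))))
    ∧ ∃ f₀ : L2,
        (⇑f₀ =ᵐ[volume] fun x : ℝ =>
          ((x : ℂ) - lam)⁻¹ - (Phi / Dl) * ψ x / ((x : ℂ) - lam))
        ∧ f₀ ≠ 0
        ∧ {f : L2 | ∃ (c : ℂ) (h : inDomAstar f c), AtildeStarOp φ ψ f c h = lam • f}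
            = {f : L2 | ∃ c : ℂ, f = c • f₀} := by
  have heigen : ∀ (f : L2) (c : ℂ) (h : inDomAstar f c), AtildeStarOp φ ψ f c h = lam • f ↔
      ⇑f =ᵐ[volume] fun x : ℝ =>
        c * (((x : ℂ) - lam)⁻¹ - (Phi / Dl) * ψ x / ((x : ℂ) - lam)) := fun f c h =>
    (atildeStarOp_eq_smul_iff hlam φ ψ f c h).trans
      (ae_eq_div_inner_iff hlam φ ψ f c Dl Phi hD hPhi hDne)
  set g : ℝ → ℂ := fun x : ℝ => ((x : ℂ) - lam)⁻¹ - (Phi / Dl) * ψ x / ((x : ℂ) - lam)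
  have hg : MemLp g 2 volume := (memLp_two_inv_ofReal_sub hlam).sub
    (MemLp.div_ofReal_sub hlam ((Lp.memLp ψ).const_mul (Phi / Dl)))
  have hsmul : ∀ c : ℂ, ⇑(c • hg.toLp g) =ᵐ[volume] fun x => c * g x := fun c => by
    filter_upwards [Lp.coeFn_smul c (hg.toLp g), hg.coeFn_toLp] with x hsmulx hgx
    rw [hsmulx, Pi.smul_apply, hgx, smul_eq_mul]
  refine ⟨heigen, hg.toLp g, hg.coeFn_toLp, fun h0 =>
    not_ae_eq_zero_inv_ofReal_sub_sub_mul_div hlam ψ (Phi / Dl)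
      (hg.coeFn_toLp.symm.trans (Lp.eq_zero_iff_ae_eq_zero.mp h0)), ?_⟩
  ext f
  constructor
  · rintro ⟨c, h, hf⟩
    exact ⟨c, Lp.ext_iff.mpr (((heigen f c h).mp hf).trans (hsmul c).symm)⟩
  · rintro ⟨c, rfl⟩
    have hdiv : ⇑(c • hg.toLp g) =ᵐ[volume] fun x : ℝ =>
        (c - c * (Phi / Dl) * ψ x) / ((x : ℂ) - lam) :=
      (hsmul c).trans (.of_forall fun x => by simp only [g]; ring)
    have h := inDomAstar_of_ae_eq_div hlam ψ _ hdiv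
    exact ⟨c, h, (heigen _ c h).mpr (hsmul c)⟩
end
end
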